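/- arXiv:1704.00209 — 15 statements merged into one kernel-verified Lean document; each statement's English description precedes it below -/
import Mathlib

section
/- Let V be a completely distributive complete lattice, A a set, f : A → V a function and 𝔵 an ultrafilter on A. Then sup_{S ∈ 𝔵} inf_{s ∈ S} f(s) = inf_{S ∈ 𝔵} sup_{s ∈ S} f(s). -/
/-- **Minimax lemma** (Lemma 3.12 of the paper): for a completely distributive
complete lattice `V`, a function `f : A → V` and an ultrafilter `𝔵` on `A`,
`sup_{S ∈ 𝔵} inf_{s ∈ S} f s = inf_{S ∈ 𝔵} sup_{s ∈ S} f s`. -/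
theorem minimax_ultrafilter {V : Type*} [CompletelyDistribLattice V] {A : Type*}
    (f : A → V) (𝔵 : Ultrafilter A) :
    (⨆ S : Set A, ⨆ _ : S ∈ 𝔵, ⨅ s ∈ S, f s) =
      ⨅ S : Set A, ⨅ _ : S ∈ 𝔵, ⨆ s ∈ S, f s := by
  apply le_antisymm
  · refine iSup₂_le fun S hS => le_iInf₂ fun T hT => ?_
    obtain ⟨a, haS, haT⟩ := Ultrafilter.nonempty_of_mem (𝔵.inter_mem hS hT)
    exact le_trans (iInf₂_le a haS) (le_iSup₂ (f := fun s (_ : s ∈ T) => f s) a haT)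
  · have h1 : (⨅ S : Set A, ⨅ _ : S ∈ 𝔵, ⨆ s ∈ S, f s)
        = ⨅ S : {S : Set A // S ∈ 𝔵}, ⨆ s : S.1, f s := by
      rw [iInf_subtype']
      exact iInf_congr fun S => by rw [iSup_subtype']
    rw [h1, iInf_iSup_eq]
    refine iSup_le fun g => ?_
    set R : Set A := Set.range (fun S : {S : Set A // S ∈ 𝔵} => (g S : A)) with hR
    have hRmem : R ∈ 𝔵 := by
      by_contra h
      have hc : Rᶜ ∈ 𝔵 := (Ultrafilter.compl_mem_iff_notMem).2 h
      exact (g ⟨Rᶜ, hc⟩).2 ⟨⟨Rᶜ, hc⟩, rfl⟩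
    refine le_trans ?_ (le_iSup₂ (α := V) R hRmem)
    refine le_iInf₂ fun t ht => ?_
    obtain ⟨S, rfl⟩ := ht
    exact iInf_le _ S
end

section
/- Let V be a quantale, A, B, M V-categories, d : A → M and l : B → M V-functors and J : A ⇸ B a V-profunctor. Say that l is the left Kan extension of d along J if (i) J(x,y) ≤ M̄(d x, l y) for all x ∈ A, y ∈ B, and (ii) for every V-category C, V-profunctor H : B ⇸ C and V-functor g : C → M, if sup_{y ∈ B} J(x,y) ⊗ H(y,c) ≤ M̄(d x, g c) for all x ∈ A and c ∈ C, then H(y,c) ≤ M̄(l y, g c) for all y ∈ B, c ∈ C. Then l is the left Kan extension of d along J if and only if M̄(l y, z) = inf_{x ∈ A} (J(x,y) ⊸ M̄(d x, z)) for all y ∈ B and z ∈ M. In particular, if M = V_⊸ then a V-functor l : B → V_⊸ is the left Kan extension of d along J if and only if l y = sup_{x ∈ A} d x ⊗ J(x,y) for all y ∈ B. -/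
universe u

/-- The internal hom of a quantale: `v ⊸ w = sup {u | v ⊗ u ≤ w}`. -/
def qhimp {V : Type u} [CompleteLattice V] [Monoid V] (v w : V) : V :=
  sSup {u | v * u ≤ w}

/-- `l : B → M` is the left Kan extension of `d : A → M` along the `V`-profunctor
`J : A ⇸ B`: (i) `J(x,y) ≤ M̄(d x, l y)`, and (ii) for every `V`-category `C`,
`V`-profunctor `H : B ⇸ C` and `V`-functor `g : C → M`, if
`sup_y J(x,y) ⊗ H(y,c) ≤ M̄(d x, g c)` for all `x, c`, then
`H(y,c) ≤ M̄(l y, g c)` for all `y, c`. -/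
def IsLeftKanExt {V : Type u} [CompleteLattice V] [Monoid V]
    {A B M : Type u} (Bbar : B → B → V) (Mbar : M → M → V)
    (d : A → M) (J : A → B → V) (l : B → M) : Prop :=
  (∀ x y, J x y ≤ Mbar (d x) (l y)) ∧
  ∀ (C : Type u) (Cbar : C → C → V),
    (∀ c, (1 : V) ≤ Cbar c c) →
    (∀ c₁ c₂ c₃, Cbar c₁ c₂ * Cbar c₂ c₃ ≤ Cbar c₁ c₃) →
    ∀ H : B → C → V,
      (∀ y₁ y₂ c₁ c₂, Bbar y₁ y₂ * H y₂ c₁ * Cbar c₁ c₂ ≤ H y₁ c₂) →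
      ∀ g : C → M,
        (∀ c₁ c₂, Cbar c₁ c₂ ≤ Mbar (g c₁) (g c₂)) →
        (∀ x c, (⨆ y, J x y * H y c) ≤ Mbar (d x) (g c)) →
        ∀ y c, H y c ≤ Mbar (l y) (g c)

section Aux

variable {V : Type u} [CompleteLattice V] [Monoid V]

lemma aux_mul_mono_left (hl : ∀ (v : V) (S : Set V), v * sSup S = ⨆ w ∈ S, v * w)
    {a b : V} (v : V) (h : a ≤ b) : v * a ≤ v * b := by
  have h2 : v * b = v * sSup {a, b} := by rw [sSup_pair, sup_eq_right.mpr h]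
  rw [h2, hl]
  exact le_iSup₂ (f := fun w (_ : w ∈ ({a, b} : Set V)) => v * w) a (Set.mem_insert a {b})

lemma aux_mul_mono_right (hr : ∀ (v : V) (S : Set V), sSup S * v = ⨆ w ∈ S, w * v)
    {a b : V} (v : V) (h : a ≤ b) : a * v ≤ b * v := by
  have h2 : b * v = sSup {a, b} * v := by rw [sSup_pair, sup_eq_right.mpr h]
  rw [h2, hr]
  exact le_iSup₂ (f := fun w (_ : w ∈ ({a, b} : Set V)) => w * v) a (Set.mem_insert a {b})

lemma aux_counit (hl : ∀ (v : V) (S : Set V), v * sSup S = ⨆ w ∈ S, v * w)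
    (v w : V) : v * qhimp v w ≤ w := by
  rw [qhimp, hl]
  exact iSup₂_le fun u hu => hu

lemma aux_le_qhimp_iff (hl : ∀ (v : V) (S : Set V), v * sSup S = ⨆ w ∈ S, v * w)
    {u v w : V} : u ≤ qhimp v w ↔ v * u ≤ w := by
  constructor
  · intro h
    exact le_trans (aux_mul_mono_left hl v h) (aux_counit hl v w)
  · intro h
    exact le_sSup h

lemma aux_iSup_mul (hr : ∀ (v : V) (S : Set V), sSup S * v = ⨆ w ∈ S, w * v)
    {ι : Sort*} (f : ι → V) (v : V) : (⨆ i, f i) * v = ⨆ i, f i * v := by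
  rw [← sSup_range, hr, iSup_range]

/-- The general characterisation (Part 1), stated as a standalone lemma. -/
lemma kan_iff {V : Type u} [CompleteLattice V] [Monoid V]
    (hl : ∀ (v : V) (S : Set V), v * sSup S = ⨆ w ∈ S, v * w)
    (hr : ∀ (v : V) (S : Set V), sSup S * v = ⨆ w ∈ S, w * v)
    {A B M : Type u}
    (Abar : A → A → V) (hA₁ : ∀ x, (1 : V) ≤ Abar x x)
    (Bbar : B → B → V)
    (Mbar : M → M → V) (hM₁ : ∀ z, (1 : V) ≤ Mbar z z)
    (hM₂ : ∀ x y z, Mbar x y * Mbar y z ≤ Mbar x z)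
    (d : A → M) (l : B → M) (J : A → B → V)
    (hJ : ∀ x₁ x₂ y₁ y₂, Abar x₁ x₂ * J x₂ y₁ * Bbar y₁ y₂ ≤ J x₁ y₂) :
    IsLeftKanExt Bbar Mbar d J l ↔
      ∀ y z, Mbar (l y) z = ⨅ x, qhimp (J x y) (Mbar (d x) z) := by
  constructor
  · rintro ⟨h1, h2⟩ y z
    apply le_antisymm
    · refine le_iInf fun x => (aux_le_qhimp_iff hl).mpr ?_
      exact le_trans (aux_mul_mono_right hr _ (h1 x y)) (hM₂ _ _ _)
    · set H : B → M → V := fun y' m => ⨅ x, qhimp (J x y') (Mbar (d x) m) with hH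
      have hprof : ∀ y₁ y₂ m₁ m₂, Bbar y₁ y₂ * H y₂ m₁ * Mbar m₁ m₂ ≤ H y₁ m₂ := by
        intro y₁ y₂ m₁ m₂
        refine le_iInf fun x => (aux_le_qhimp_iff hl).mpr ?_
        have e : J x y₁ * (Bbar y₁ y₂ * H y₂ m₁ * Mbar m₁ m₂)
            = ((J x y₁ * Bbar y₁ y₂) * H y₂ m₁) * Mbar m₁ m₂ := by
          simp only [mul_assoc]
        rw [e]
        have s1 : J x y₁ * Bbar y₁ y₂ ≤ J x y₂ := by
          have : J x y₁ * Bbar y₁ y₂ ≤ (Abar x x * J x y₁) * Bbar y₁ y₂ := by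
            refine aux_mul_mono_right hr _ ?_
            calc J x y₁ = 1 * J x y₁ := (one_mul _).symm
              _ ≤ Abar x x * J x y₁ := aux_mul_mono_right hr _ (hA₁ x)
          exact le_trans this (hJ x x y₁ y₂)
        have s2 : J x y₂ * H y₂ m₁ ≤ Mbar (d x) m₁ :=
          (aux_le_qhimp_iff hl).mp (iInf_le _ x)
        calc ((J x y₁ * Bbar y₁ y₂) * H y₂ m₁) * Mbar m₁ m₂
            ≤ (J x y₂ * H y₂ m₁) * Mbar m₁ m₂ := by
              exact aux_mul_mono_right hr _ (aux_mul_mono_right hr _ s1)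
          _ ≤ Mbar (d x) m₁ * Mbar m₁ m₂ := aux_mul_mono_right hr _ s2
          _ ≤ Mbar (d x) m₂ := hM₂ _ _ _
      have hcond : ∀ x m, (⨆ y', J x y' * H y' m) ≤ Mbar (d x) m := by
        intro x m
        exact iSup_le fun y' => (aux_le_qhimp_iff hl).mp (iInf_le _ x)
      have := h2 M Mbar hM₁ hM₂ H hprof id (fun c₁ c₂ => le_rfl) hcond y z
      exact this
  · intro hf
    constructor
    · intro x y
      have h1 : (1 : V) ≤ qhimp (J x y) (Mbar (d x) (l y)) :=
        le_trans (hM₁ (l y)) ((hf y (l y)).le.trans (iInf_le _ x))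
      have := (aux_le_qhimp_iff hl).mp h1
      rwa [mul_one] at this
    · intro C Cbar _ _ H _ g _ hcond y c
      rw [hf y (g c)]
      exact le_iInf fun x => (aux_le_qhimp_iff hl).mpr
        (le_trans (le_iSup (fun y' => J x y' * H y' c) y) (hcond x c))

end Aux

/-- **Proposition 2.2**: `l` is the left Kan extension of `d` along `J` iff
`M̄(l y, z) = inf_x (J(x,y) ⊸ M̄(d x, z))`; in particular, for `M = V_⊸`,
`l` is the left Kan extension of `d` along `J` iff `l y = sup_x d x ⊗ J(x,y)`. -/
theorem leftKanExt_characterisation {V : Type u} [CompleteLattice V] [Monoid V]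
    (hl : ∀ (v : V) (S : Set V), v * sSup S = ⨆ w ∈ S, v * w)
    (hr : ∀ (v : V) (S : Set V), sSup S * v = ⨆ w ∈ S, w * v)
    {A B M : Type u}
    (Abar : A → A → V) (hA₁ : ∀ x, (1 : V) ≤ Abar x x)
    (hA₂ : ∀ x y z, Abar x y * Abar y z ≤ Abar x z)
    (Bbar : B → B → V) (hB₁ : ∀ y, (1 : V) ≤ Bbar y y)
    (hB₂ : ∀ x y z, Bbar x y * Bbar y z ≤ Bbar x z)
    (Mbar : M → M → V) (hM₁ : ∀ z, (1 : V) ≤ Mbar z z)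
    (hM₂ : ∀ x y z, Mbar x y * Mbar y z ≤ Mbar x z)
    (d : A → M) (hd : ∀ x y, Abar x y ≤ Mbar (d x) (d y))
    (l : B → M) (hlf : ∀ y y', Bbar y y' ≤ Mbar (l y) (l y'))
    (J : A → B → V)
    (hJ : ∀ x₁ x₂ y₁ y₂, Abar x₁ x₂ * J x₂ y₁ * Bbar y₁ y₂ ≤ J x₁ y₂) :
    (IsLeftKanExt Bbar Mbar d J l ↔
      ∀ y z, Mbar (l y) z = ⨅ x, qhimp (J x y) (Mbar (d x) z)) ∧
    (∀ d' : A → V, ∀ l' : B → V,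
      (∀ x y, Abar x y ≤ qhimp (d' x) (d' y)) →
      (∀ y y', Bbar y y' ≤ qhimp (l' y) (l' y')) →
      (IsLeftKanExt Bbar (fun v w => qhimp v w) d' J l' ↔
        ∀ y, l' y = ⨆ x, d' x * J x y)) := by
  have hq₁ : ∀ z : V, (1 : V) ≤ qhimp z z := fun z =>
    (aux_le_qhimp_iff hl).mpr (by rw [mul_one])
  have hq₂ : ∀ x y z : V, qhimp x y * qhimp y z ≤ qhimp x z := by
    intro x y z
    refine (aux_le_qhimp_iff hl).mpr ?_
    rw [← mul_assoc]
    exact le_trans (aux_mul_mono_right hr _ (aux_counit hl x y)) (aux_counit hl y z)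
  constructor
  · exact kan_iff hl hr Abar hA₁ Bbar Mbar hM₁ hM₂ d l J hJ
  · intro d' l' hd' hl'
    rw [kan_iff hl hr Abar hA₁ Bbar (fun v w => qhimp v w) hq₁ hq₂ d' l' J hJ]
    have collapse : ∀ y z, (⨅ x, qhimp (J x y) (qhimp (d' x) z))
        = qhimp (⨆ x, d' x * J x y) z := by
      intro y z
      have key : ∀ u : V, (u ≤ ⨅ x, qhimp (J x y) (qhimp (d' x) z)) ↔
          u ≤ qhimp (⨆ x, d' x * J x y) z := by
        intro u
        rw [le_iInf_iff, aux_le_qhimp_iff hl, aux_iSup_mul hr]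
        constructor
        · intro h
          refine iSup_le fun x => ?_
          rw [mul_assoc]
          exact le_trans (aux_mul_mono_left hl _
            ((aux_le_qhimp_iff hl).mp (h x))) (aux_counit hl _ _)
        · intro h x
          rw [aux_le_qhimp_iff hl, aux_le_qhimp_iff hl, ← mul_assoc]
          exact le_trans (le_iSup (fun x => d' x * J x y * u) x) h
      exact le_antisymm ((key _).mp le_rfl) ((key _).mpr le_rfl)
    constructor
    · intro h y
      have h1 := h y (l' y)
      have h2 := h y (⨆ x, d' x * J x y)
      rw [collapse] at h1 h2
      apply le_antisymm
      · have : (1 : V) ≤ qhimp (⨆ x, d' x * J x y) (⨆ x, d' x * J x y) := hq₁ _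
        rw [← h2] at this
        have := (aux_le_qhimp_iff hl).mp this
        rwa [mul_one] at this
      · have : (1 : V) ≤ qhimp (l' y) (l' y) := hq₁ _
        rw [h1] at this
        have := (aux_le_qhimp_iff hl).mp this
        rwa [mul_one] at this
    · intro h y z
      rw [collapse, h y]
end

section
/- Let V be a completely distributive quantale and J : A × B → V a V-relation between sets. Then for every subset R ⊆ A and every ultrafilter 𝔶 on B: sup_{T ∈ 𝔶} inf_{t ∈ T} sup_{s ∈ R} J(s,t) = sup{ (UJ)(𝔵,𝔶) | 𝔵 an ultrafilter on A with R ∈ 𝔵 }. (In other words, PJ ∘ ε_B = ε_A ∘ UJ, where ε_A(S,𝔵) = k if S ∈ 𝔵 and ⊥ otherwise.) -/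
/-- Along an ultrafilter, in a completely distributive lattice,
the `limsup` is below the `liminf`. -/
lemma ultra_limsup_le_liminf {V : Type*} [CompletelyDistribLattice V]
    {B : Type*} (𝔶 : Ultrafilter B) (f : B → V) :
    (⨅ T : Set B, ⨅ _ : T ∈ 𝔶, ⨆ t ∈ T, f t) ≤
      ⨆ T : Set B, ⨆ _ : T ∈ 𝔶, ⨅ t ∈ T, f t := by
  have h1 : (⨅ T : Set B, ⨅ _ : T ∈ 𝔶, ⨆ t ∈ T, f t)
      = ⨅ T : {T : Set B // T ∈ 𝔶}, ⨆ t : T.1, f t := by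
    rw [iInf_subtype']
    exact iInf_congr fun T => iSup_subtype'
  rw [h1, iInf_iSup_eq]
  refine iSup_le fun g => ?_
  set c : V := ⨅ T : {T : Set B // T ∈ 𝔶}, f ((g T : T.1) : B) with hc
  have hU : {t : B | c ≤ f t} ∈ 𝔶 := by
    by_contra h
    have h' : {t : B | c ≤ f t}ᶜ ∈ 𝔶 := (Ultrafilter.compl_mem_iff_notMem).2 h
    have := (g ⟨_, h'⟩).2
    exact this (iInf_le (fun T : {T : Set B // T ∈ 𝔶} => f ((g T : T.1) : B)) ⟨_, h'⟩)
  refine le_iSup_of_le {t : B | c ≤ f t} (le_iSup_of_le hU ?_)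
  exact le_iInf₂ fun t ht => ht

/-- **Proposition 3.8(b)** of the paper: for a completely distributive quantale `V`
and a `V`-relation `J : A ⇸ B`, for every `R ⊆ A` and ultrafilter `𝔶` on `B`:
`sup_{T ∈ 𝔶} inf_{t ∈ T} sup_{s ∈ R} J(s,t)
  = sup { (UJ)(𝔵,𝔶) | 𝔵 an ultrafilter on A with R ∈ 𝔵 }`,
i.e. `PJ ∘ ε_B = ε_A ∘ UJ`. -/
theorem Prel_eps_eq_eps_Urel {V : Type*} [CompletelyDistribLattice V] [Monoid V]
    (hl : ∀ (v : V) (S : Set V), v * sSup S = ⨆ w ∈ S, v * w)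
    (hr : ∀ (v : V) (S : Set V), sSup S * v = ⨆ w ∈ S, w * v)
    {A B : Type*} (J : A → B → V) (R : Set A) (𝔶 : Ultrafilter B) :
    (⨆ T : Set B, ⨆ _ : T ∈ 𝔶, ⨅ t ∈ T, ⨆ s ∈ R, J s t) =
      ⨆ 𝔵 : Ultrafilter A, ⨆ _ : R ∈ 𝔵,
        ⨅ S : Set A, ⨅ _ : S ∈ 𝔵, ⨅ T : Set B, ⨅ _ : T ∈ 𝔶,
          ⨆ s ∈ S, ⨆ t ∈ T, J s t := by
  classical
  apply le_antisymm
  · refine iSup₂_le fun T hT => ?_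
    rcases R.eq_empty_or_nonempty with rfl | ⟨r₀, hr₀⟩
    · obtain ⟨t₀, ht₀⟩ := Ultrafilter.nonempty_of_mem hT
      refine le_trans (iInf₂_le t₀ ht₀) ?_
      simp
    · have hCD : (⨅ t ∈ T, ⨆ s ∈ R, J s t)
          = ⨆ g : {t : B // t ∈ T} → {s : A // s ∈ R},
              ⨅ t : {t : B // t ∈ T}, J (g t) t := by
        rw [iInf_subtype']
        rw [show (⨅ t : {t : B // t ∈ T}, ⨆ s ∈ R, J s (t : B))
            = ⨅ t : {t : B // t ∈ T}, ⨆ s : {s : A // s ∈ R}, J s (t : B) from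
          iInf_congr fun t => iSup_subtype']
        exact iInf_iSup_eq
      rw [hCD]
      refine iSup_le fun g => ?_
      set F : B → A := fun b => if h : b ∈ T then (g ⟨b, h⟩ : A) else r₀ with hF
      have hFR : ∀ b, F b ∈ R := by
        intro b
        by_cases h : b ∈ T
        · simp only [hF, dif_pos h]; exact (g ⟨b, h⟩).2
        · simp only [hF, dif_neg h]; exact hr₀
      refine le_iSup_of_le (𝔶.map F) (le_iSup_of_le ?_ ?_)
      · exact Ultrafilter.mem_map.2 (Filter.mem_of_superset Filter.univ_mem (fun b _ => hFR b))
      · refine le_iInf fun S => le_iInf fun hS => le_iInf fun T' => le_iInf fun hT' => ?_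
        have hS' : F ⁻¹' S ∈ 𝔶 := hS
        have hW : (F ⁻¹' S ∩ T') ∩ T ∈ 𝔶 :=
          Filter.inter_mem (Filter.inter_mem hS' hT') hT
        obtain ⟨t, ⟨htS, htT'⟩, htT⟩ := Ultrafilter.nonempty_of_mem hW
        have hFt : F t = (g ⟨t, htT⟩ : A) := by
          simp only [hF]; exact dif_pos htT
        refine le_trans (iInf_le _ ⟨t, htT⟩) ?_
        refine le_trans ?_ (le_iSup₂_of_le (F t) htS (le_iSup₂_of_le t htT' le_rfl))
        rw [hFt]
  · refine iSup₂_le fun 𝔵 h𝔵 => ?_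
    refine le_trans ?_ (ultra_limsup_le_liminf 𝔶 (fun t => ⨆ s ∈ R, J s t))
    refine le_iInf fun T => le_iInf fun hT => ?_
    refine le_trans (iInf₂_le R h𝔵) ?_
    refine le_trans (iInf₂_le T hT) ?_
    refine iSup₂_le fun s hs => iSup₂_le fun t ht => ?_
    exact le_iSup₂_of_le t ht (le_iSup₂_of_le s hs le_rfl)
end

section
/- Let V be a completely distributive quantale, A and B sets, UA the set of ultrafilters on A, and H : UA × B → V a V-relation. Suppose that inf_{σ ∈ 𝔛} sup_{𝔶 ∈ σ} H(𝔶, y) ≤ H(μ_A 𝔛, y) for every ultrafilter 𝔛 on UA and every y ∈ B. Then inf_{S ∈ 𝔵} sup{ H(𝔶, y) | 𝔶 ∈ UA with S ∈ 𝔶 } = H(𝔵, y) for every 𝔵 ∈ UA and y ∈ B. -/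
/-- **Proposition 3.8(c)** of the paper: let `V` be a completely distributive
quantale and `H : UA ⇸ B` a `V`-relation satisfying
`inf_{σ ∈ 𝔛} sup_{𝔶 ∈ σ} H(𝔶,y) ≤ H(μ_A 𝔛, y)` for every ultrafilter `𝔛` on `UA`
and `y ∈ B` (here `μ_A 𝔛 = 𝔛.bind id`, with `S ∈ μ_A 𝔛 ⟺ {𝔵 | S ∈ 𝔵} ∈ 𝔛`).
Then `inf_{S ∈ 𝔵} sup {H(𝔶,y) | S ∈ 𝔶} = H(𝔵,y)` for all `𝔵 ∈ UA`, `y ∈ B`. -/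
theorem eps_lhom_eps_comp {V : Type*} [CompletelyDistribLattice V] [Monoid V]
    (hl : ∀ (v : V) (S : Set V), v * sSup S = ⨆ w ∈ S, v * w)
    (hr : ∀ (v : V) (S : Set V), sSup S * v = ⨆ w ∈ S, w * v)
    {A B : Type*} (H : Ultrafilter A → B → V)
    (hH : ∀ (𝔛 : Ultrafilter (Ultrafilter A)) (y : B),
      (⨅ σ : Set (Ultrafilter A), ⨅ _ : σ ∈ 𝔛, ⨆ 𝔶 ∈ σ, H 𝔶 y) ≤ H (𝔛.bind id) y) :
    ∀ (𝔵 : Ultrafilter A) (y : B),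
      (⨅ S : Set A, ⨅ _ : S ∈ 𝔵,
        ⨆ 𝔶 : Ultrafilter A, ⨆ _ : S ∈ 𝔶, H 𝔶 y) = H 𝔵 y := by
  intro 𝔵 y
  refine le_antisymm ?_ (le_iInf fun S => le_iInf fun hS =>
    le_iSup_of_le 𝔵 (le_iSup_of_le hS le_rfl))
  have eq1 : (⨅ S : Set A, ⨅ _ : S ∈ 𝔵,
        ⨆ 𝔶 : Ultrafilter A, ⨆ _ : S ∈ 𝔶, H 𝔶 y)
      = ⨅ S : {S : Set A // S ∈ 𝔵}, ⨆ 𝔶 : {𝔶 : Ultrafilter A // S.1 ∈ 𝔶}, H 𝔶.1 y := by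
    rw [iInf_subtype']
    exact iInf_congr fun S => iSup_subtype'
  rw [eq1, iInf_iSup_eq]
  refine iSup_le fun g => ?_
  set B' : {S : Set A // S ∈ 𝔵} → Set (Ultrafilter A) :=
    fun S => {𝔷 | ∃ T : {T : Set A // T ∈ 𝔵}, T.1 ⊆ S.1 ∧ 𝔷 = (g T).1} with hB'
  have hne : ∀ S, (g S).1 ∈ B' S := fun S => ⟨S, subset_rfl, rfl⟩
  have hdir : Directed (· ≥ ·) fun S => (Filter.principal (B' S)) := by
    intro S S'
    refine ⟨⟨S.1 ∩ S'.1, Filter.inter_mem S.2 S'.2⟩,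
      Filter.principal_mono.2 ?_, Filter.principal_mono.2 ?_⟩ <;>
      rintro 𝔷 ⟨T, hT, rfl⟩
    · exact ⟨T, hT.trans Set.inter_subset_left, rfl⟩
    · exact ⟨T, hT.trans Set.inter_subset_right, rfl⟩
  haveI hnb : Filter.NeBot (⨅ S, Filter.principal (B' S)) := by
    haveI : Nonempty {S : Set A // S ∈ 𝔵} := ⟨⟨Set.univ, Filter.univ_mem⟩⟩
    haveI : Nonempty (Ultrafilter A) := ⟨𝔵⟩
    exact Filter.iInf_neBot_of_directed hdir fun S =>
      Filter.principal_neBot_iff.2 ⟨_, hne S⟩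
  set 𝔛 : Ultrafilter (Ultrafilter A) := Ultrafilter.of (⨅ S, Filter.principal (B' S))
  have hB : ∀ S, B' S ∈ 𝔛 := fun S =>
    Ultrafilter.of_le _ (Filter.mem_iInf_of_mem S (Filter.mem_principal_self _))
  have hbind : 𝔛.bind id = 𝔵 := by
    have hle : (𝔛.bind id : Filter A) ≤ 𝔵 := by
      intro S hS
      have hsub : B' ⟨S, hS⟩ ⊆ {𝔷 : Ultrafilter A | S ∈ (id 𝔷 : Ultrafilter A)} := by
        rintro 𝔷 ⟨T, hTS, rfl⟩
        exact Filter.mem_of_superset (g T).2 hTS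
      exact Filter.mem_bind'.2 (𝔛.mem_of_superset (hB ⟨S, hS⟩) hsub)
    exact Ultrafilter.coe_le_coe.1 hle
  refine le_trans ?_ (hbind ▸ hH 𝔛 y)
  refine le_iInf fun σ => le_iInf fun hσ => ?_
  obtain ⟨𝔷, h𝔷σ, T, -, rfl⟩ :=
    Filter.nonempty_of_mem (Filter.inter_mem hσ (hB ⟨Set.univ, Filter.univ_mem⟩))
  exact le_trans (iInf_le _ T) (le_iSup_of_le (g T).1 (le_iSup_of_le h𝔷σ le_rfl))
end

section
/- Let V be a completely distributive quantale and (A, α) a unitary (U,V)-graph. Define δ : P(A) × A → V by δ(S,x) = sup{ α(𝔶,x) | 𝔶 ∈ UA with S ∈ 𝔶 }. Then (A, δ) is a V-valued pretopological space, and moreover inf_{S ∈ 𝔵} δ(S,x) = α(𝔵,x) for every ultrafilter 𝔵 on A and every x ∈ A. -/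
/-- The closure relation `δ = ε_A ∘ α` induced by a `V`-valued convergence
relation `α`: `δ(S,x) = sup { α(𝔶,x) | 𝔶 ∈ UA with S ∈ 𝔶 }`. -/
def epsComp {V : Type*} [CompleteLattice V] {A : Type*}
    (α : Ultrafilter A → A → V) (S : Set A) (x : A) : V :=
  ⨆ 𝔶 : Ultrafilter A, ⨆ _ : S ∈ 𝔶, α 𝔶 x

/-- Part of **Theorem 3.11** of the paper: for a unitary `(U,V)`-graph `(A,α)`
over a completely distributive quantale `V`, the relation
`δ(S,x) = sup { α(𝔶,x) | S ∈ 𝔶 }` makes `A` a `V`-valued pretopological space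
(reflexivity, monotonicity, preservation of finite joins), and moreover
`inf_{S ∈ 𝔵} δ(S,x) = α(𝔵,x)`. -/
theorem unitary_graph_to_pretop {V : Type*} [CompletelyDistribLattice V] [Monoid V]
    (hl : ∀ (v : V) (S : Set V), v * sSup S = ⨆ w ∈ S, v * w)
    (hr : ∀ (v : V) (S : Set V), sSup S * v = ⨆ w ∈ S, w * v)
    {A : Type*} (α : Ultrafilter A → A → V)
    (hrefl : ∀ x : A, (1 : V) ≤ α (pure x) x)
    (hunit : ∀ (𝔛 : Ultrafilter (Ultrafilter A)) (x : A),
      (⨅ σ : Set (Ultrafilter A), ⨅ _ : σ ∈ 𝔛, ⨆ 𝔵 ∈ σ, α 𝔵 x) ≤ α (𝔛.bind id) x) :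
    (∀ x : A, (1 : V) ≤ epsComp α {x} x) ∧
    (∀ (S T : Set A) (x : A), S ⊆ T → epsComp α S x ≤ epsComp α T x) ∧
    (∀ x : A, epsComp α ∅ x = ⊥) ∧
    (∀ (S T : Set A) (x : A), epsComp α (S ∪ T) x = epsComp α S x ⊔ epsComp α T x) ∧
    (∀ (𝔵 : Ultrafilter A) (x : A),
      (⨅ S : Set A, ⨅ _ : S ∈ 𝔵, epsComp α S x) = α 𝔵 x) := by
  have mono : ∀ (S T : Set A) (x : A), S ⊆ T → epsComp α S x ≤ epsComp α T x := by
    intro S T x hST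
    refine iSup_le fun 𝔶 => iSup_le fun hS => ?_
    exact le_iSup_of_le 𝔶 (le_iSup_of_le (Filter.mem_of_superset hS hST) le_rfl)
  refine ⟨?_, mono, ?_, ?_, ?_⟩
  · intro x
    exact le_trans (hrefl x) (le_iSup_of_le (pure x)
      (le_iSup_of_le (by simp) le_rfl))
  · intro x
    refine le_antisymm (iSup_le fun 𝔶 => iSup_le fun h => absurd h (by simp)) bot_le
  · intro S T x
    refine le_antisymm ?_ (sup_le (mono _ _ _ Set.subset_union_left)
      (mono _ _ _ Set.subset_union_right))
    refine iSup_le fun 𝔶 => iSup_le fun h => ?_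
    rcases (Ultrafilter.union_mem_iff).1 h with h | h
    · exact le_sup_of_le_left (le_iSup_of_le 𝔶 (le_iSup_of_le h le_rfl))
    · exact le_sup_of_le_right (le_iSup_of_le 𝔶 (le_iSup_of_le h le_rfl))
  · intro 𝔵 x
    refine le_antisymm ?_ (le_iInf fun S => le_iInf fun hS =>
      le_iSup_of_le 𝔵 (le_iSup_of_le hS le_rfl))
    -- rewrite as subtype infimum/supremum and apply complete distributivity
    have key : (⨅ S : Set A, ⨅ _ : S ∈ 𝔵, epsComp α S x)
        = ⨅ S : {S : Set A // S ∈ 𝔵}, ⨆ 𝔶 : {𝔶 : Ultrafilter A // (S : Set A) ∈ 𝔶},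
            α 𝔶 x := by
      rw [iInf_subtype']
      refine iInf_congr fun S => ?_
      unfold epsComp
      rw [iSup_subtype']
    rw [key, iInf_iSup_eq]
    refine iSup_le fun f => ?_
    -- build an ultrafilter on Ultrafilter A
    set B : {S : Set A // S ∈ 𝔵} → Set (Ultrafilter A) :=
      fun S => {𝔶 | ∃ T : {S : Set A // S ∈ 𝔵}, (T : Set A) ⊆ S ∧ f T = 𝔶} with hB
    have hne : ∀ S, (B S).Nonempty := fun S => ⟨f S, S, le_rfl, rfl⟩
    have hidx : Nonempty {S : Set A // S ∈ 𝔵} := ⟨⟨Set.univ, Filter.univ_mem⟩⟩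
    have hdir : Directed (· ≥ ·) fun S => Filter.principal (B S) := by
      intro S T
      refine ⟨⟨S ∩ T, Filter.inter_mem S.2 T.2⟩, ?_, ?_⟩ <;>
        · simp only [ge_iff_le, Filter.principal_mono]
          rintro 𝔶 ⟨U, hU, rfl⟩
          exact ⟨U, hU.trans (by simp), rfl⟩
    have hF : (⨅ S, Filter.principal (B S)).NeBot := by
      refine Filter.iInf_neBot_of_directed' hdir fun S => ?_
      exact Filter.principal_neBot_iff.2 (hne S)
    obtain ⟨𝔛, h𝔛⟩ := Ultrafilter.exists_le (⨅ S, Filter.principal (B S))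
    have hBmem : ∀ S, B S ∈ 𝔛 := fun S => by
      have h1 : (⨅ S, Filter.principal (B S)) ≤ Filter.principal (B S) := iInf_le _ S
      exact (h𝔛.trans h1) (Filter.mem_principal_self _)
    -- bind 𝔛 id = 𝔵
    have hbind : 𝔛.bind id = 𝔵 := by
      apply Ultrafilter.eq_of_le
      intro S hS
      rw [Ultrafilter.mem_coe] at hS
      have hco : (↑(𝔛.bind id) : Filter A)
          = Filter.bind (↑𝔛) (fun 𝔶 : Ultrafilter A => (𝔶 : Filter A)) := rfl
      rw [Ultrafilter.mem_coe, ← Ultrafilter.mem_coe, hco, Filter.mem_bind']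
      refine Filter.mem_of_superset (hBmem ⟨S, hS⟩) ?_
      rintro 𝔶 ⟨T, hTS, rfl⟩
      exact Filter.mem_of_superset (f T).2 hTS
    calc (⨅ S : {S : Set A // S ∈ 𝔵}, α (f S) x)
        ≤ ⨅ σ : Set (Ultrafilter A), ⨅ _ : σ ∈ 𝔛, ⨆ 𝔶 ∈ σ, α 𝔶 x := by
          refine le_iInf fun σ => le_iInf fun hσ => ?_
          obtain ⟨𝔶, h𝔶σ, T, -, rfl⟩ :=
            Filter.nonempty_of_mem (Filter.inter_mem hσ (hBmem ⟨Set.univ, Filter.univ_mem⟩))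
          exact le_trans (iInf_le _ T) (le_iSup_of_le (f T) (le_iSup_of_le h𝔶σ le_rfl))
      _ ≤ α (𝔛.bind id) x := hunit 𝔛 x
      _ = α 𝔵 x := by rw [hbind]
end

section
/- Let V be a completely distributive quantale and (A, δ) a V-valued preclosure space. Define α : UA × A → V by α(𝔵,x) = inf_{S ∈ 𝔵} δ(S,x). Then (A, α) is a unitary (U,V)-graph. If moreover (A, δ) is a V-valued pretopological space, then sup{ α(𝔶,x) | 𝔶 ∈ UA with S ∈ 𝔶 } = δ(S,x) for every S ⊆ A and x ∈ A. -/
/-!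
Unitarity holds for any preclosure: if `S ∈ μ 𝔛` then `{𝔵 | S ∈ 𝔵} ∈ 𝔛`, and every `𝔵` in that set
has `α(𝔵,x) ≤ δ(S,x)`. For the equation, complete distributivity writes `δ(S,x)` as the supremum of
the elements `u` totally below it. For such a `u`, the sets `T` with `u ≰ δ(T,x)` cannot cover `S`
finitely, since `δ` turns finite unions into finite joins; so some ultrafilter contains `S` and none
of them, and its `α(·,x)` lies above `u`.
-/

/-- The convergence relation `α = ε_A ⊸ δ` induced by a `V`-valued closure
relation `δ`: `α(𝔵,x) = inf_{S ∈ 𝔵} δ(S,x)`. -/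
def epsLhom {V : Type*} [CompleteLattice V] {A : Type*}
    (δ : Set A → A → V) (𝔵 : Ultrafilter A) (x : A) : V :=
  ⨅ S : Set A, ⨅ _ : S ∈ 𝔵, δ S x

theorem le_iSup_totallyBelow {V : Type*} [CompletelyDistribLattice V] (b : V) :
    b ≤ ⨆ (u : V) (_ : ∀ T : Set V, b ≤ sSup T → ∃ c ∈ T, u ≤ c), u := by
  let Covers := {T : Set V // b ≤ sSup T}
  calc b ≤ ⨅ T : Covers, ⨆ c : T.1, (c : V) := le_iInf fun T => sSup_eq_iSup' T.1 ▸ T.2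
    _ = ⨆ g : (T : Covers) → T.1, ⨅ T : Covers, (g T : V) := iInf_iSup_eq
    _ ≤ _ := iSup_le fun g =>
      le_iSup₂_of_le (⨅ T : Covers, (g T : V))
        (fun T hT => ⟨g ⟨T, hT⟩, (g ⟨T, hT⟩).2, iInf_le (fun T : Covers => (g T : V)) ⟨T, hT⟩⟩)
        le_rfl

theorem Ultrafilter.exists_mem_forall_notMem {A : Type*} {S : Set A} {J : Set (Set A)}
    (h : ∀ F ⊆ J, F.Finite → ¬S ⊆ ⋃₀ F) : ∃ 𝔶 : Ultrafilter A, S ∈ 𝔶 ∧ ∀ T ∈ J, T ∉ 𝔶 := by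
  have hfip : ∀ t ⊆ insert S (compl '' J), t.Finite → (⋂₀ t).Nonempty := by
    intro t ht htfin
    have hF : compl '' (t \ {S}) ⊆ J := by
      rintro _ ⟨T, hT, rfl⟩
      obtain ⟨T', hT', rfl⟩ := (ht hT.1).resolve_left hT.2
      rwa [compl_compl]
    obtain ⟨a, haS, haF⟩ := Set.not_subset.mp (h _ hF (htfin.sdiff.image compl))
    refine ⟨a, fun T hT => ?_⟩
    by_cases hTS : T = S
    · exact hTS ▸ haS
    · by_contra haT
      exact haF ⟨Tᶜ, ⟨T, ⟨hT, hTS⟩, rfl⟩, haT⟩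
  have := Filter.generate_neBot_iff.mpr hfip
  obtain ⟨𝔶, h𝔶⟩ := Ultrafilter.exists_le (Filter.generate (insert S (compl '' J)))
  have hgen : ∀ T ∈ insert S (compl '' J), T ∈ 𝔶 := fun T hT => h𝔶 (Filter.mem_generate_of_mem hT)
  exact ⟨𝔶, hgen S (Set.mem_insert _ _), fun T hT =>
    Ultrafilter.compl_mem_iff_notMem.mp (hgen _ (Set.mem_insert_of_mem _ ⟨T, hT, rfl⟩))⟩

section Preclosure

variable {V : Type*} [CompleteLattice V] {A : Type*} {δ : Set A → A → V}

theorem epsLhom_le {𝔵 : Ultrafilter A} {S : Set A} (hS : S ∈ 𝔵) (x : A) :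
    epsLhom δ 𝔵 x ≤ δ S x :=
  iInf₂_le S hS

theorem epsLhom_pure (hmono : ∀ (S T : Set A) (x : A), S ⊆ T → δ S x ≤ δ T x) (y x : A) :
    epsLhom δ (pure y) x = δ {y} x :=
  le_antisymm (epsLhom_le rfl x) <|
    le_iInf₂ fun _ hS => hmono _ _ _ (Set.singleton_subset_iff.mpr (Ultrafilter.mem_pure.mp hS))

theorem iInf_iSup_epsLhom_le_epsLhom_bind (𝔛 : Ultrafilter (Ultrafilter A)) (x : A) :
    (⨅ σ : Set (Ultrafilter A), ⨅ _ : σ ∈ 𝔛, ⨆ 𝔵 ∈ σ, epsLhom δ 𝔵 x) ≤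
      epsLhom δ (𝔛.bind id) x :=
  le_iInf₂ fun S hS =>
    (iInf₂_le {𝔵 : Ultrafilter A | S ∈ 𝔵} (Filter.mem_bind'.mp hS)).trans <|
      iSup₂_le fun _ h𝔵 => epsLhom_le h𝔵 x

theorem monotone_of_map_union (hunion : ∀ (S T : Set A) (x : A), δ (S ∪ T) x = δ S x ⊔ δ T x)
    {S T : Set A} (hST : S ⊆ T) (x : A) : δ S x ≤ δ T x := by
  rw [← Set.union_eq_self_of_subset_left hST, hunion]
  exact le_sup_left

theorem map_sUnion_eq_sSup_image (hempty : ∀ x : A, δ ∅ x = ⊥)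
    (hunion : ∀ (S T : Set A) (x : A), δ (S ∪ T) x = δ S x ⊔ δ T x)
    {F : Set (Set A)} (hF : F.Finite) (x : A) :
    δ (⋃₀ F) x = sSup ((δ · x) '' F) := by
  induction F, hF using Set.Finite.induction_on with
  | empty => simp [hempty]
  | insert _ _ ih => rw [Set.sUnion_insert, hunion, ih, Set.image_insert_eq, sSup_insert]

theorem exists_mem_le_epsLhom (hempty : ∀ x : A, δ ∅ x = ⊥)
    (hunion : ∀ (S T : Set A) (x : A), δ (S ∪ T) x = δ S x ⊔ δ T x) {S : Set A} {x : A} {u : V}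
    (hu : ∀ T : Set V, δ S x ≤ sSup T → ∃ c ∈ T, u ≤ c) :
    ∃ 𝔶 : Ultrafilter A, S ∈ 𝔶 ∧ u ≤ epsLhom δ 𝔶 x := by
  have hcover : ∀ F ⊆ {T | ¬u ≤ δ T x}, F.Finite → ¬S ⊆ ⋃₀ F := by
    intro F hFJ hF hSF
    have hle : δ S x ≤ sSup ((δ · x) '' F) :=
      (monotone_of_map_union hunion hSF x).trans (map_sUnion_eq_sSup_image hempty hunion hF x).le
    obtain ⟨_, ⟨T, hT, rfl⟩, huT⟩ := hu _ hle
    exact hFJ hT huT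
  obtain ⟨𝔶, hS, hJ⟩ := Ultrafilter.exists_mem_forall_notMem hcover
  exact ⟨𝔶, hS, le_iInf₂ fun T hT => not_not.mp fun hnu => hJ T hnu hT⟩

end Preclosure

theorem iSup_epsLhom_eq {V : Type*} [CompletelyDistribLattice V] {A : Type*} {δ : Set A → A → V}
    (hempty : ∀ x : A, δ ∅ x = ⊥)
    (hunion : ∀ (S T : Set A) (x : A), δ (S ∪ T) x = δ S x ⊔ δ T x) (S : Set A) (x : A) :
    (⨆ 𝔶 : Ultrafilter A, ⨆ _ : S ∈ 𝔶, epsLhom δ 𝔶 x) = δ S x := by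
  refine le_antisymm (iSup₂_le fun _ h𝔶 => epsLhom_le h𝔶 x) ?_
  refine (le_iSup_totallyBelow _).trans (iSup₂_le fun u hu => ?_)
  obtain ⟨𝔶, hS, hu𝔶⟩ := exists_mem_le_epsLhom hempty hunion hu
  exact le_iSup₂_of_le 𝔶 hS hu𝔶

theorem preclosure_to_unitary_graph_general {V : Type*} [CompletelyDistribLattice V] [Monoid V]
    {A : Type*} (δ : Set A → A → V)
    (hrefl : ∀ x : A, (1 : V) ≤ δ {x} x)
    (hmono : ∀ (S T : Set A) (x : A), S ⊆ T → δ S x ≤ δ T x) :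
    ((∀ x : A, (1 : V) ≤ epsLhom δ (pure x) x) ∧
      (∀ (𝔛 : Ultrafilter (Ultrafilter A)) (x : A),
        (⨅ σ : Set (Ultrafilter A), ⨅ _ : σ ∈ 𝔛, ⨆ 𝔵 ∈ σ, epsLhom δ 𝔵 x) ≤
          epsLhom δ (𝔛.bind id) x)) ∧
    ((∀ x : A, δ ∅ x = ⊥) →
      (∀ (S T : Set A) (x : A), δ (S ∪ T) x = δ S x ⊔ δ T x) →
      ∀ (S : Set A) (x : A),
        (⨆ 𝔶 : Ultrafilter A, ⨆ _ : S ∈ 𝔶, epsLhom δ 𝔶 x) = δ S x) :=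
  ⟨⟨fun x => (epsLhom_pure hmono x x).symm ▸ hrefl x, iInf_iSup_epsLhom_le_epsLhom_bind⟩,
    fun hempty hunion => iSup_epsLhom_eq hempty hunion⟩

/-- Part of **Theorem 3.11** of the paper: for a `V`-valued preclosure space
`(A,δ)` over a completely distributive quantale `V`, the relation
`α(𝔵,x) = inf_{S ∈ 𝔵} δ(S,x)` makes `A` a unitary `(U,V)`-graph; if moreover
`(A,δ)` is a `V`-valued pretopological space then
`sup { α(𝔶,x) | S ∈ 𝔶 } = δ(S,x)` for all `S ⊆ A`, `x ∈ A`. -/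
theorem preclosure_to_unitary_graph {V : Type*} [CompletelyDistribLattice V] [Monoid V]
    (hl : ∀ (v : V) (S : Set V), v * sSup S = ⨆ w ∈ S, v * w)
    (hr : ∀ (v : V) (S : Set V), sSup S * v = ⨆ w ∈ S, w * v)
    {A : Type*} (δ : Set A → A → V)
    (hrefl : ∀ x : A, (1 : V) ≤ δ {x} x)
    (hmono : ∀ (S T : Set A) (x : A), S ⊆ T → δ S x ≤ δ T x) :
    ((∀ x : A, (1 : V) ≤ epsLhom δ (pure x) x) ∧
      (∀ (𝔛 : Ultrafilter (Ultrafilter A)) (x : A),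
        (⨅ σ : Set (Ultrafilter A), ⨅ _ : σ ∈ 𝔛, ⨆ 𝔵 ∈ σ, epsLhom δ 𝔵 x) ≤
          epsLhom δ (𝔛.bind id) x)) ∧
    ((∀ x : A, δ ∅ x = ⊥) →
      (∀ (S T : Set A) (x : A), δ (S ∪ T) x = δ S x ⊔ δ T x) →
      ∀ (S : Set A) (x : A),
        (⨆ 𝔶 : Ultrafilter A, ⨆ _ : S ∈ 𝔶, epsLhom δ 𝔶 x) = δ S x) :=
  preclosure_to_unitary_graph_general δ hrefl hmono
end

section
/- Let V be a completely distributive quantale, (A, α) a unitary (U,V)-graph, (B, ζ) a V-valued preclosure space, and f : A → B a function. Write δ(S,x) = sup{ α(𝔶,x) | 𝔶 ∈ UA with S ∈ 𝔶 } and, for 𝔵 ∈ UA, let (Uf)(𝔵) be the pushforward ultrafilter on B. Then the following are equivalent: (i) δ(S,x) ≤ ζ(f(S), f(x)) for all S ⊆ A and x ∈ A; (ii) α(𝔵,x) ≤ inf_{T ∈ (Uf)(𝔵)} ζ(T, f(x)) for all 𝔵 ∈ UA and x ∈ A. (This is the hom-bijection of the adjunction between the algebraic functor and its right adjoint.) 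-/
/-- The hom-bijection of the adjunction of **Theorem 3.11** of the paper: for a
unitary `(U,V)`-graph `(A,α)`, a `V`-valued preclosure space `(B,ζ)` and a
function `f : A → B`, continuity of `f` with respect to the induced closure
relation `δ(S,x) = sup { α(𝔶,x) | S ∈ 𝔶 }` on `A` is equivalent to continuity
of `f` with respect to `α` and the induced convergence relation
`inf_{T ∈ Uf(𝔵)} ζ(T,·)` on `B`. -/
theorem continuity_adjunction {V : Type*} [CompletelyDistribLattice V] [Monoid V]
    (hl : ∀ (v : V) (S : Set V), v * sSup S = ⨆ w ∈ S, v * w)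
    (hr : ∀ (v : V) (S : Set V), sSup S * v = ⨆ w ∈ S, w * v)
    {A B : Type*}
    (α : Ultrafilter A → A → V)
    (hrefl : ∀ x : A, (1 : V) ≤ α (pure x) x)
    (hunit : ∀ (𝔛 : Ultrafilter (Ultrafilter A)) (x : A),
      (⨅ σ : Set (Ultrafilter A), ⨅ _ : σ ∈ 𝔛, ⨆ 𝔵 ∈ σ, α 𝔵 x) ≤ α (𝔛.bind id) x)
    (ζ : Set B → B → V)
    (hζrefl : ∀ y : B, (1 : V) ≤ ζ {y} y)
    (hζmono : ∀ (S T : Set B) (y : B), S ⊆ T → ζ S y ≤ ζ T y)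
    (f : A → B) :
    (∀ (S : Set A) (x : A), epsComp α S x ≤ ζ (f '' S) (f x)) ↔
      (∀ (𝔵 : Ultrafilter A) (x : A),
        α 𝔵 x ≤ ⨅ T : Set B, ⨅ _ : T ∈ Ultrafilter.map f 𝔵, ζ T (f x)) := by
  constructor
  · intro h 𝔵 x
    refine le_iInf fun T => le_iInf fun hT => ?_
    have hS : f ⁻¹' T ∈ 𝔵 := hT
    have h1 : α 𝔵 x ≤ epsComp α (f ⁻¹' T) x :=
      le_trans (le_iSup (fun _ : f ⁻¹' T ∈ 𝔵 => α 𝔵 x) hS)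
        (le_iSup (fun 𝔶 : Ultrafilter A => ⨆ _ : f ⁻¹' T ∈ 𝔶, α 𝔶 x) 𝔵)
    exact h1.trans ((h _ x).trans (hζmono _ _ _ (Set.image_preimage_subset f T)))
  · intro h S x
    refine iSup_le fun 𝔶 => iSup_le fun hS => ?_
    have hT : f '' S ∈ Ultrafilter.map f 𝔶 :=
      Ultrafilter.mem_map.2 (Filter.mem_of_superset hS (Set.subset_preimage_image f S)) 
    exact (h 𝔶 x).trans (iInf_le_of_le (f '' S) (iInf_le _ hT))
end

section
/- Let V be a completely distributive quantale and (A, Ā) a V-category. (i) If δ : P(A) × A → V satisfies the modularity axiom (inf_{t ∈ T} sup_{s ∈ S} Ā(s,t)) ⊗ δ(T,x) ⊗ Ā(x,y) ≤ δ(S,y) for all S, T ⊆ A and x, y ∈ A, then α(𝔵,x) := inf_{S ∈ 𝔵} δ(S,x) satisfies (UĀ)(𝔵,𝔶) ⊗ α(𝔶,x) ⊗ Ā(x,y) ≤ α(𝔵,y) for all ultrafilters 𝔵, 𝔶 on A and x, y ∈ A. (ii) Conversely, if α : UA × A → V satisfies (UĀ)(𝔵,𝔶) ⊗ α(𝔶,x)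 ⊗ Ā(x,y) ≤ α(𝔵,y) for all 𝔵, 𝔶, x, y, then δ(S,x) := sup{ α(𝔶,x) | 𝔶 ∈ UA with S ∈ 𝔶 } satisfies (inf_{t ∈ T} sup_{s ∈ S} Ā(s,t)) ⊗ δ(T,x) ⊗ Ā(x,y) ≤ δ(S,y) for all S, T, x, y. -/
/-!
Every `u` in a completely distributive lattice is the supremum of the elements totally below it,
so by sup-preservation of `⊗` it suffices to prove both inequalities with the first factor replaced
by some `v` totally below it. For (i), with `v` totally below `(UĀ)(𝔵,𝔶)` and `S ∈ 𝔵`, the set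
`T = {t | v ≤ sup_{s ∈ S} Ā(s,t)}` lies in `𝔶`, and modularity of `δ` at `(S, T)` gives the claim.
For (ii), with `v` totally below `inf_{t ∈ T} sup_{s ∈ S} Ā(s,t)`, pick for every `t ∈ T` some
`g t ∈ S` with `v ≤ Ā(g t, t)`; then `𝔵 = g(𝔶)` contains `S` and `v ≤ (UĀ)(𝔵,𝔶)`.
-/

/-- The Barr extension of a `V`-relation `K : X ⇸ Y` to ultrafilters:
`(UK)(𝔛,𝔜) = inf_{σ ∈ 𝔛, τ ∈ 𝔜} sup_{x ∈ σ, y ∈ τ} K(x,y)`. -/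
def Urel {V : Type*} [CompleteLattice V] {X Y : Type*} (K : X → Y → V)
    (𝔛 : Ultrafilter X) (𝔜 : Ultrafilter Y) : V :=
  ⨅ σ : Set X, ⨅ _ : σ ∈ 𝔛, ⨅ τ : Set Y, ⨅ _ : τ ∈ 𝔜, ⨆ x ∈ σ, ⨆ y ∈ τ, K x y

open Quantale

def TotallyBelow {V : Type*} [CompleteLattice V] (v b : V) : Prop :=
  ∀ S : Set V, b ≤ sSup S → ∃ a ∈ S, v ≤ a

section TotallyBelow

variable {V : Type*}

theorem TotallyBelow.exists_le_of_le_iSup [CompleteLattice V] {v b : V} (h : TotallyBelow v b)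
    {ι : Sort*} {f : ι → V} (hb : b ≤ ⨆ i, f i) : ∃ i, v ≤ f i := by
  obtain ⟨_, ⟨i, rfl⟩, hv⟩ := h (Set.range f) (by rwa [sSup_range])
  exact ⟨i, hv⟩

theorem le_iSup_totallyBelow_s8 [CompletelyDistribLattice V] (b : V) :
    b ≤ ⨆ v : {v : V // TotallyBelow v b}, (v : V) := by
  have hb : b ≤ ⨅ S : {S : Set V // b ≤ sSup S}, ⨆ a : S.1, (a : V) :=
    le_iInf fun S => S.2.trans_eq (sSup_eq_iSup' _)
  -- after swapping by complete distributivity, the infimum of each choice function is totally below `b`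
  rw [iInf_iSup_eq] at hb
  refine hb.trans (iSup_le fun g => le_iSup_of_le ⟨⨅ S, (g S : V), ?_⟩ le_rfl)
  intro T hT
  exact ⟨g ⟨T, hT⟩, (g ⟨T, hT⟩).2, iInf_le (fun S => (g S : V)) ⟨T, hT⟩⟩

theorem Quantale.mul_le_of_forall_totallyBelow [CompletelyDistribLattice V] [Semigroup V]
    [IsQuantale V] {a b c : V} (h : ∀ v, TotallyBelow v a → v * b ≤ c) : a * b ≤ c :=
  calc a * b ≤ (⨆ v : {v : V // TotallyBelow v a}, (v : V)) * b :=
        mul_le_mul_left (le_iSup_totallyBelow_s8 a) b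
    _ = ⨆ v : {v : V // TotallyBelow v a}, (v : V) * b := iSup_mul_distrib
    _ ≤ c := iSup_le fun v => h v v.2

end TotallyBelow

section Urel

variable {V : Type*} [CompleteLattice V] {X Y : Type*} {K : X → Y → V}

theorem setOf_le_iSup_mem_of_totallyBelow_urel {𝔵 : Ultrafilter X} {𝔶 : Ultrafilter Y} {v : V}
    (hv : TotallyBelow v (Urel K 𝔵 𝔶)) {S : Set X} (hS : S ∈ 𝔵) :
    {t | v ≤ ⨆ s ∈ S, K s t} ∈ 𝔶 := by
  by_contra hT
  have hU : Urel K 𝔵 𝔶 ≤ ⨆ t : ↥{t | v ≤ ⨆ s ∈ S, K s t}ᶜ, ⨆ s ∈ S, K s t :=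
    (iInf₂_le S hS).trans <| (iInf₂_le _ (Ultrafilter.compl_mem_iff_notMem.mpr hT)).trans <|
      iSup₂_le fun s hs => iSup₂_le fun t ht => le_iSup_of_le ⟨t, ht⟩ (le_iSup₂_of_le s hs le_rfl)
  obtain ⟨t, hvt⟩ := hv.exists_le_of_le_iSup hU
  exact t.2 hvt

theorem exists_le_urel_of_totallyBelow_iInf_iSup {𝔶 : Ultrafilter Y} {S : Set X} {T : Set Y}
    (hT : T ∈ 𝔶) {v : V} (hv : TotallyBelow v (⨅ t ∈ T, ⨆ s ∈ S, K s t)) :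
    ∃ 𝔵 : Ultrafilter X, S ∈ 𝔵 ∧ v ≤ Urel K 𝔵 𝔶 := by
  have hST : ∀ t ∈ T, ∃ s ∈ S, v ≤ K s t := fun t ht => by
    obtain ⟨⟨s, hs⟩, hvs⟩ := hv.exists_le_of_le_iSup <| (iInf₂_le t ht).trans <|
      iSup₂_le fun s hs => le_iSup (fun s : S => K s t) ⟨s, hs⟩
    exact ⟨s, hs, hvs⟩
  obtain ⟨t₀, ht₀⟩ := 𝔶.nonempty_of_mem hT
  obtain ⟨s₀, -⟩ := hST t₀ ht₀
  have : Nonempty X := ⟨s₀⟩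
  choose! g hg using hST
  refine ⟨𝔶.map g, Ultrafilter.mem_map.mpr (Filter.mem_of_superset hT fun t ht => (hg t ht).1), ?_⟩
  refine le_iInf₂ fun σ hσ => le_iInf₂ fun τ hτ => ?_
  obtain ⟨t, htσ, htτ, htT⟩ :=
    𝔶.nonempty_of_mem (Filter.inter_mem (Ultrafilter.mem_map.mp hσ) (Filter.inter_mem hτ hT))
  exact le_iSup₂_of_le (g t) htσ (le_iSup₂_of_le t htτ (hg t htT).2)

end Urel

section Modularity

variable {V : Type*} [CompletelyDistribLattice V] [Semigroup V] [IsQuantale V]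
  {A : Type*} {Abar : A → A → V}

theorem urel_mul_iInf_mul_le_of_modular {δ : Set A → A → V}
    (hδ : ∀ (S T : Set A) (x y : A), (⨅ t ∈ T, ⨆ s ∈ S, Abar s t) * δ T x * Abar x y ≤ δ S y)
    {𝔵 𝔶 : Ultrafilter A} {S : Set A} (hS : S ∈ 𝔵) (x y : A) :
    Urel Abar 𝔵 𝔶 * (⨅ T : Set A, ⨅ _ : T ∈ 𝔶, δ T x) * Abar x y ≤ δ S y := by
  rw [mul_assoc]
  refine mul_le_of_forall_totallyBelow fun v hv => ?_
  set T := {t | v ≤ ⨆ s ∈ S, Abar s t}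
  have hT : T ∈ 𝔶 := setOf_le_iSup_mem_of_totallyBelow_urel hv hS
  calc v * ((⨅ T : Set A, ⨅ _ : T ∈ 𝔶, δ T x) * Abar x y)
      ≤ (⨅ t ∈ T, ⨆ s ∈ S, Abar s t) * δ T x * Abar x y := by
        rw [mul_assoc]; gcongr
        · exact le_iInf₂ fun t ht => ht
        · exact iInf₂_le T hT
    _ ≤ δ S y := hδ S T x y

theorem iInf_iSup_mul_iSup_mul_le_of_modular {α : Ultrafilter A → A → V}
    (hα : ∀ (𝔵 𝔶 : Ultrafilter A) (x y : A), Urel Abar 𝔵 𝔶 * α 𝔶 x * Abar x y ≤ α 𝔵 y)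
    (S T : Set A) (x y : A) :
    (⨅ t ∈ T, ⨆ s ∈ S, Abar s t) * (⨆ 𝔶 : Ultrafilter A, ⨆ _ : T ∈ 𝔶, α 𝔶 x) * Abar x y ≤
      ⨆ 𝔵 : Ultrafilter A, ⨆ _ : S ∈ 𝔵, α 𝔵 y := by
  rw [iSup_subtype', mul_iSup_distrib, iSup_mul_distrib]
  refine iSup_le fun ⟨𝔶, hT⟩ => ?_
  rw [mul_assoc]
  refine mul_le_of_forall_totallyBelow fun v hv => ?_
  obtain ⟨𝔵, hS, hv𝔵⟩ := exists_le_urel_of_totallyBelow_iInf_iSup hT hv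
  calc v * (α 𝔶 x * Abar x y) ≤ Urel Abar 𝔵 𝔶 * α 𝔶 x * Abar x y := by
        rw [mul_assoc]; gcongr
    _ ≤ α 𝔵 y := hα 𝔵 𝔶 x y
    _ ≤ ⨆ 𝔵 : Ultrafilter A, ⨆ _ : S ∈ 𝔵, α 𝔵 y := le_iSup₂_of_le 𝔵 hS le_rfl

end Modularity

theorem modularity_transfer_general {V : Type*} [CompletelyDistribLattice V] [Monoid V]
    (hl : ∀ (v : V) (S : Set V), v * sSup S = ⨆ w ∈ S, v * w)
    (hr : ∀ (v : V) (S : Set V), sSup S * v = ⨆ w ∈ S, w * v)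
    {A : Type*} (Abar : A → A → V) :
    (∀ δ : Set A → A → V,
      (∀ (S T : Set A) (x y : A),
        (⨅ t ∈ T, ⨆ s ∈ S, Abar s t) * δ T x * Abar x y ≤ δ S y) →
      ∀ (𝔵 𝔶 : Ultrafilter A) (x y : A),
        Urel Abar 𝔵 𝔶 * (⨅ S : Set A, ⨅ _ : S ∈ 𝔶, δ S x) * Abar x y ≤
          ⨅ S : Set A, ⨅ _ : S ∈ 𝔵, δ S y) ∧
    (∀ α : Ultrafilter A → A → V,
      (∀ (𝔵 𝔶 : Ultrafilter A) (x y : A),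
        Urel Abar 𝔵 𝔶 * α 𝔶 x * Abar x y ≤ α 𝔵 y) →
      ∀ (S T : Set A) (x y : A),
        (⨅ t ∈ T, ⨆ s ∈ S, Abar s t) *
            (⨆ 𝔶 : Ultrafilter A, ⨆ _ : T ∈ 𝔶, α 𝔶 x) * Abar x y ≤
          ⨆ 𝔶 : Ultrafilter A, ⨆ _ : S ∈ 𝔶, α 𝔶 y) := by
  let _ : IsQuantale V := ⟨hl, fun S v => hr v S⟩
  exact ⟨fun δ hδ 𝔵 𝔶 x y => le_iInf₂ fun S hS => urel_mul_iInf_mul_le_of_modular hδ hS x y,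
    fun α hα => iInf_iSup_mul_iSup_mul_le_of_modular hα⟩

/-- Part of **Theorem 4.8** of the paper: over a completely distributive quantale,
the correspondence `δ ↦ α := inf_{S ∈ 𝔵} δ(S,·)` and
`α ↦ δ := sup_{S ∈ 𝔶} α(𝔶,·)` preserves modularity with respect to a
`V`-category structure `Ā` on `A`, in both directions. -/
theorem modularity_transfer {V : Type*} [CompletelyDistribLattice V] [Monoid V]
    (hl : ∀ (v : V) (S : Set V), v * sSup S = ⨆ w ∈ S, v * w)
    (hr : ∀ (v : V) (S : Set V), sSup S * v = ⨆ w ∈ S, w * v)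
    {A : Type*} (Abar : A → A → V)
    (hA₁ : ∀ x, (1 : V) ≤ Abar x x)
    (hA₂ : ∀ x y z, Abar x y * Abar y z ≤ Abar x z) :
    (∀ δ : Set A → A → V,
      (∀ (S T : Set A) (x y : A),
        (⨅ t ∈ T, ⨆ s ∈ S, Abar s t) * δ T x * Abar x y ≤ δ S y) →
      ∀ (𝔵 𝔶 : Ultrafilter A) (x y : A),
        Urel Abar 𝔵 𝔶 * (⨅ S : Set A, ⨅ _ : S ∈ 𝔶, δ S x) * Abar x y ≤
          ⨅ S : Set A, ⨅ _ : S ∈ 𝔵, δ S y) ∧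
    (∀ α : Ultrafilter A → A → V,
      (∀ (𝔵 𝔶 : Ultrafilter A) (x y : A),
        Urel Abar 𝔵 𝔶 * α 𝔶 x * Abar x y ≤ α 𝔵 y) →
      ∀ (S T : Set A) (x y : A),
        (⨅ t ∈ T, ⨆ s ∈ S, Abar s t) *
            (⨆ 𝔶 : Ultrafilter A, ⨆ _ : T ∈ 𝔶, α 𝔶 x) * Abar x y ≤
          ⨆ 𝔶 : Ultrafilter A, ⨆ _ : S ∈ 𝔶, α 𝔶 y) :=
  modularity_transfer_general hl hr Abar
end

section
/- Let A be a completely distributive complete lattice. For a subset O ⊆ A the following are equivalent: (i) for every ultrafilter 𝔵 on A and every x ∈ O, if sup_{S ∈ 𝔵} inf S ≤ x then O ∈ 𝔵; (ii) O is a lower set and every down-directed subset D ⊆ A with inf D ∈ O satisfies D ∩ O ≠ ∅. (Condition (i) says O is open in the topology corresponding to the ultrafilter convergence 𝔵 → x ⟺ sup_{S ∈ 𝔵} inf S ≤ x; condition (ii) says O is open in the Scott topology.) -/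
/-- **Proposition 5.5** of the paper: for a completely distributive complete
lattice `A`, a subset `O ⊆ A` is open for the ultrafilter convergence
`𝔵 → x ⟺ sup_{S ∈ 𝔵} inf S ≤ x` precisely if `O` is a lower set such that every
down-directed `D ⊆ A` with `inf D ∈ O` meets `O` (i.e. `O` is Scott open). -/
theorem convergence_open_iff_scott_open {A : Type*} [CompletelyDistribLattice A]
    (O : Set A) :
    (∀ (𝔵 : Ultrafilter A), ∀ x ∈ O,
        (⨆ S : Set A, ⨆ _ : S ∈ 𝔵, sInf S) ≤ x → O ∈ 𝔵) ↔
      (IsLowerSet O ∧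
        ∀ D : Set A, D.Nonempty →
          (∀ a ∈ D, ∀ b ∈ D, ∃ c ∈ D, c ≤ a ∧ c ≤ b) →
          sInf D ∈ O → (D ∩ O).Nonempty) := by
  classical
  constructor
  · intro H
    constructor
    · intro x y hyx hx
      have h1 : (⨆ S : Set A, ⨆ _ : S ∈ (pure y : Ultrafilter A), sInf S) ≤ x := by
        refine iSup₂_le fun S hS => ?_
        exact le_trans (sInf_le (Ultrafilter.mem_pure.mp hS)) hyx
      exact Ultrafilter.mem_pure.mp (H (pure y) x hx h1)
    · intro D hne hdir hinf
      set Sa : A → Set A := fun a => {b | b ∈ D ∧ b ≤ a} with hSa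
      have hmemSa : ∀ a ∈ D, a ∈ Sa a := fun a ha => ⟨ha, le_refl a⟩
      let F : Filter A :=
        { sets := {T | ∃ a ∈ D, Sa a ⊆ T}
          univ_sets := ⟨hne.choose, hne.choose_spec, Set.subset_univ _⟩
          sets_of_superset := by
            rintro T U ⟨a, ha, hsub⟩ hTU
            exact ⟨a, ha, hsub.trans hTU⟩
          inter_sets := by
            rintro T U ⟨a, ha, hT⟩ ⟨b, hb, hU⟩
            obtain ⟨c, hc, hca, hcb⟩ := hdir a ha b hb
            exact ⟨c, hc, fun z hz => ⟨hT ⟨hz.1, hz.2.trans hca⟩, hU ⟨hz.1, hz.2.trans hcb⟩⟩⟩ }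
      have hFne : F.NeBot := by
        rw [Filter.neBot_iff]
        intro h
        have h0 : (∅ : Set A) ∈ F := h ▸ Filter.mem_bot
        obtain ⟨a, ha, hsub⟩ := h0
        exact hsub (hmemSa a ha)
      let 𝔵 := Ultrafilter.of F
      have hle : (𝔵 : Filter A) ≤ F := Ultrafilter.of_le F
      have hDmem : D ∈ 𝔵 := hle ⟨hne.choose, hne.choose_spec, fun z hz => hz.1⟩
      have hconv : (⨆ S : Set A, ⨆ _ : S ∈ 𝔵, sInf S) ≤ sInf D := by
        refine iSup₂_le fun S hS => le_sInf fun a ha => ?_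
        have h1 : Sa a ∈ 𝔵 := hle ⟨a, ha, le_refl _⟩
        obtain ⟨b, hbS, hbD, hba⟩ :=
          Ultrafilter.nonempty_of_mem (𝔵.inter_sets hS h1)
        exact (sInf_le hbS).trans hba
      have hO : O ∈ 𝔵 := H 𝔵 (sInf D) hinf hconv
      exact Ultrafilter.nonempty_of_mem (𝔵.inter_sets hDmem hO)
  · rintro ⟨hlow, hscott⟩ 𝔵 x hx hconv
    set c : A := ⨆ S : Set A, ⨆ _ : S ∈ 𝔵, sInf S with hc
    have hcO : c ∈ O := hlow hconv hx
    let ι := {S : Set A // S ∈ 𝔵}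
    have hne : ∀ S : ι, (S.1 : Set A).Nonempty := fun S => Ultrafilter.nonempty_of_mem S.2
    let d : (∀ S : ι, S.1) → A := fun g => ⨆ S : ι, (g S : A)
    have key : ∀ g : (∀ S : ι, S.1), {s : A | s ≤ d g} ∈ 𝔵 := by
      intro g
      by_contra h
      have hcompl : {s : A | s ≤ d g}ᶜ ∈ 𝔵 := (Ultrafilter.compl_mem_iff_notMem).mpr h
      have h1 := (g ⟨{s : A | s ≤ d g}ᶜ, hcompl⟩).2
      exact h1 (le_iSup (fun S : ι => (g S : A)) ⟨{s : A | s ≤ d g}ᶜ, hcompl⟩)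
    set D : Set A := Set.range d with hD
    have hDne : D.Nonempty :=
      ⟨d (fun S => ⟨(hne S).choose, (hne S).choose_spec⟩), Set.mem_range_self _⟩
    have hdir : ∀ a ∈ D, ∀ b ∈ D, ∃ e ∈ D, e ≤ a ∧ e ≤ b := by
      rintro _ ⟨g, rfl⟩ _ ⟨h, rfl⟩
      have hU : {s : A | s ≤ d g} ∩ {s : A | s ≤ d h} ∈ 𝔵 := 𝔵.inter_sets (key g) (key h)
      have hSU : ∀ S : ι, (S.1 ∩ ({s : A | s ≤ d g} ∩ {s : A | s ≤ d h})).Nonempty :=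
        fun S => Ultrafilter.nonempty_of_mem (𝔵.inter_sets S.2 hU)
      let k : ∀ S : ι, S.1 := fun S => ⟨(hSU S).choose, (hSU S).choose_spec.1⟩
      refine ⟨d k, Set.mem_range_self k, ?_, ?_⟩
      · exact iSup_le fun S => (hSU S).choose_spec.2.1
      · exact iSup_le fun S => (hSU S).choose_spec.2.2
    have hinfD : sInf D = c := by
      have h1 : sInf D = ⨅ g : (∀ S : ι, S.1), d g := by
        rw [hD, sInf_range]
      have h2 : c = ⨆ S : ι, ⨅ s : S.1, (s : A) := by
        rw [hc, iSup_subtype']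
        exact iSup_congr fun S => sInf_eq_iInf' S.1
      rw [h1, h2, iSup_iInf_eq]
    obtain ⟨y, hyD, hyO⟩ := hscott D hDne hdir (hinfD ▸ hcO)
    obtain ⟨g, rfl⟩ := hyD
    exact Filter.mem_of_superset (key g) fun s hs => hlow hs hyO
end

section
/- Let A be a closure space equipped with a preorder ≤ such that ↑c_A(↑S) ⊆ c_A(S) for all S ⊆ A (a modular closure space), let M be a closure space equipped with a partial order such that c_M({z}) = ↑z for every z ∈ M (a normalised modular closure space), let B be an ordered set, let d : A → M be monotone and continuous (i.e. d(c_A(S)) ⊆ c_M(d(S)) for all S ⊆ A), and let J ⊆ A × B be a modular relation (x′ ≤ x, (x,y) ∈ J and y ≤ y′ imply (x′,y′) ∈ J). Write J⁻¹(y) = {x ∈ A | (x,y) ∈ J} and suppose that for every y ∈ B the supremum sup d(J⁻¹(y)) exists in M. If for every y ∈ B the set d(J⁻¹(y)) ⊆ M is compact and up-directed, then for every y ∈ B the set d(J⁻¹(y)) has a greatest element; that is, the left Kan extension l : B → M, l(y) = sup d(J⁻¹(y)), satisfies the Beck–Chevalley condition (its defining suprema are attained as maxima). -/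
universe u v w

/-- A subset `K` of a closure space `(M, cM)` is compact if every family of
closed subsets whose finite subfamilies all meet `K` has intersection meeting
`K`. -/
def ClsCompact {M : Type v} (cM : Set M → Set M) (K : Set M) : Prop :=
  ∀ {ι : Type v} (Vf : ι → Set M), (∀ i, cM (Vf i) ⊆ Vf i) →
    (∀ F : Finset ι, (K ∩ ⋂ i ∈ F, Vf i).Nonempty) →
    (K ∩ ⋂ i, Vf i).Nonempty

theorem closure_Ici_subset_of_closure_singleton {M : Type v} [Preorder M]
    {cM : Set M → Set M} (hM₃ : ∀ S, cM (cM S) ⊆ cM S) (hMnorm : ∀ z : M, cM {z} = Set.Ici z)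
    (z : M) : cM (Set.Ici z) ⊆ Set.Ici z := by
  simpa only [hMnorm] using hM₃ {z}

theorem ClsCompact.exists_isGreatest {M : Type v} [Preorder M] {cM : Set M → Set M}
    {K : Set M} (hK : ClsCompact cM K) (hIci : ∀ k ∈ K, cM (Set.Ici k) ⊆ Set.Ici k)
    (hne : K.Nonempty) (hdir : DirectedOn (· ≤ ·) K) : ∃ m, IsGreatest K m := by
  have : Nonempty K := hne.to_subtype
  have hfinite (F : Finset K) : (K ∩ ⋂ k ∈ F, Set.Ici (k : M)).Nonempty := by
    obtain ⟨m, hm⟩ := hdir.directed_val.finset_le F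
    exact ⟨m, m.2, Set.mem_iInter₂.mpr hm⟩
  obtain ⟨m, hmK, hm⟩ := hK (fun k : K ↦ Set.Ici (k : M)) (fun k ↦ hIci k k.2) hfinite
  exact ⟨m, hmK, fun z hz ↦ Set.mem_iInter.mp hm ⟨z, hz⟩⟩

theorem extreme_value_theorem_closure_spaces_general
    {A : Type u} {M : Type v} {B : Type w}
    [PartialOrder M]
    (cM : Set M → Set M)
    (hM₃ : ∀ S, cM (cM S) ⊆ cM S)
    (hMnorm : ∀ z : M, cM {z} = Set.Ici z)
    (d : A → M)
    (J : A → B → Prop)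
    (hcpt : ∀ y : B, ClsCompact cM (d '' {x | J x y}))
    (hdir : ∀ y : B, (d '' {x | J x y}).Nonempty ∧
      ∀ u ∈ d '' {x | J x y}, ∀ v ∈ d '' {x | J x y},
        ∃ w ∈ d '' {x | J x y}, u ≤ w ∧ v ≤ w) :
    ∀ y : B, ∃ m ∈ d '' {x | J x y}, ∀ z ∈ d '' {x | J x y}, z ≤ m := by
  intro y
  obtain ⟨hne, hupper⟩ := hdir y
  obtain ⟨m, hmK, hm⟩ := ClsCompact.exists_isGreatest (hcpt y)
    (fun k _ ↦ closure_Ici_subset_of_closure_singleton hM₃ hMnorm k) hne hupper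
  exact ⟨m, hmK, hm⟩

/-- **Theorem 8.1** of the paper (a generalised extreme value theorem): let `A`
be a modular closure space, `M` a normalised modular closure space (all
closures of singletons are principal upsets), `B` an ordered set, `d : A → M`
monotone continuous, and `J ⊆ A × B` a modular relation such that each
`sup d(J⁻¹ y)` exists. If every `d(J⁻¹ y)` is compact and up-directed, then
every `d(J⁻¹ y)` has a greatest element; that is, the left Kan extension
`l y = sup d(J⁻¹ y)` satisfies the Beck–Chevalley condition. -/
theorem extreme_value_theorem_closure_spaces
    {A : Type u} {M : Type v} {B : Type w}
    [Preorder A] [PartialOrder M] [Preorder B]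
    (cA : Set A → Set A) (cM : Set M → Set M)
    (hA₁ : ∀ S, S ⊆ cA S) (hA₂ : ∀ S T : Set A, S ⊆ T → cA S ⊆ cA T)
    (hA₃ : ∀ S, cA (cA S) ⊆ cA S)
    (hM₁ : ∀ S, S ⊆ cM S) (hM₂ : ∀ S T : Set M, S ⊆ T → cM S ⊆ cM T)
    (hM₃ : ∀ S, cM (cM S) ⊆ cM S)
    (hAmod : ∀ S : Set A,
      {x | ∃ s ∈ cA {a | ∃ s' ∈ S, s' ≤ a}, s ≤ x} ⊆ cA S)
    (hMnorm : ∀ z : M, cM {z} = Set.Ici z)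
    (d : A → M) (hdmono : Monotone d)
    (hdcont : ∀ S : Set A, d '' cA S ⊆ cM (d '' S))
    (J : A → B → Prop)
    (hJmod : ∀ (x' x : A) (y y' : B), x' ≤ x → J x y → y ≤ y' → J x' y')
    (hsup : ∀ y : B, ∃ m : M, IsLUB (d '' {x | J x y}) m)
    (hcpt : ∀ y : B, ClsCompact cM (d '' {x | J x y}))
    (hdir : ∀ y : B, (d '' {x | J x y}).Nonempty ∧
      ∀ u ∈ d '' {x | J x y}, ∀ v ∈ d '' {x | J x y},
        ∃ w ∈ d '' {x | J x y}, u ≤ w ∧ v ≤ w) :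
    ∀ y : B, ∃ m ∈ d '' {x | J x y}, ∀ z ∈ d '' {x | J x y}, z ≤ m :=
  extreme_value_theorem_closure_spaces_general cM hM₃ hMnorm d J hcpt hdir
end

section
/- Let & be either the usual multiplication p & q = p·q or the Łukasiewicz operation p & q = max(p + q − 1, 0) on [0,1], and let Δ_& be the quantale of distance distribution functions with the convolution product ⊗ and unit k. Then for every up-directed subset Φ ⊆ Δ_&: sup_{φ ∈ Φ} ((sup Φ) ⊸ φ) = k, where for ψ, χ ∈ Δ_& one sets ψ ⊸ χ = sup{ρ ∈ Δ_& | ψ ⊗ ρ ≤ χ}. -/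
open scoped ENNReal

instance : Fact ((0 : ℝ) ≤ 1) := ⟨zero_le_one⟩

/-- `φ : [0,∞] → [0,1]` is a distance distribution function if
`sup_{s < t} φ(s) = φ(t)` for all `t`. -/
def IsDDF (φ : ℝ≥0∞ → unitInterval) : Prop :=
  ∀ t : ℝ≥0∞, (⨆ s : {s : ℝ≥0∞ // s < t}, φ s.1) = φ t

/-- The type of distance distribution functions. -/
def DDF : Type := {φ : ℝ≥0∞ → unitInterval // IsDDF φ}

/-- The convolution product on functions `[0,∞] → [0,1]` with respect to a
binary operation `&` on `[0,1]`: `(φ ⊗ ψ)(t) = sup_{r + s ≤ t} φ(r) & ψ(s)`. -/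
noncomputable def convProd (amp : unitInterval → unitInterval → unitInterval)
    (f g : ℝ≥0∞ → unitInterval) : ℝ≥0∞ → unitInterval :=
  fun t => ⨆ p : {p : ℝ≥0∞ × ℝ≥0∞ // p.1 + p.2 ≤ t}, amp (f p.1.1) (g p.1.2)

/-- The unit `k` of the quantale `Δ_&`: `k(0) = 0` and `k(t) = 1` for `t > 0`. -/
noncomputable def kDDF : ℝ≥0∞ → unitInterval := fun t => if t = 0 then 0 else 1

/-!
Write `F` for the pointwise supremum of `Φ`. Given `0 < δ < t` and `c < 1`, it suffices to find
`φ ∈ Φ` with `c · F(s - δ) ≤ φ(s)` for all `s`: the step function `ρ` that is `0` up to `δ` and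
`c` after it then satisfies `F ⊗ ρ ≤ φ`, because both t-norms lie below the product, and
`ρ(t) = c`.

To find `φ`, note that for each level `v` some `g ∈ Φ` exceeds `v` at a point `u` that is at
most `s` whenever `F(s - δ) > v` (take `u` within `δ` of the infimum of `{F > v}`), hence
`g(s) ≥ g(u) > v` uniformly on `{F(· - δ) > v}`. Level `0` yields a uniform bound `m > 0`
there; the levels `k ε`, with `ε = (1 - c) m` and `k ≤ 1 / ε`, yield the bound `c · F(s - δ)`
elsewhere. Finitely many levels suffice, so directedness provides a single `φ`.
-/

open scoped unitInterval

theorem ENNReal.exists_mem_forall_le_add {S : Set ℝ≥0∞} (hS : S.Nonempty) {δ : ℝ≥0∞}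
    (hδ : δ ≠ 0) : ∃ u ∈ S, ∀ w ∈ S, u ≤ w + δ := by
  rcases eq_or_ne (sInf S) ∞ with h | h
  · obtain ⟨u, hu⟩ := hS
    refine ⟨u, hu, fun w hw => ?_⟩
    simp [sInf_eq_top.1 h w hw]
  · obtain ⟨u, hu, hlt⟩ := sInf_lt_iff.1 (ENNReal.lt_add_right h hδ)
    exact ⟨u, hu, fun w hw => hlt.le.trans (add_le_add_left (sInf_le hw) δ)⟩

theorem mul_le_of_forall_nat_mul_lt_imp_le {c m x y ε : ℝ} {N : ℕ} (hc : c ≤ 1) (hx0 : 0 ≤ x)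
    (hx1 : x ≤ 1) (hy : 0 ≤ y) (hε : ε ≤ (1 - c) * m) (hN : 1 ≤ N * ε)
    (hm : 0 < x → m ≤ y) (hlev : ∀ k ≤ N, k * ε < x → k * ε ≤ y) : c * x ≤ y := by
  rcases hx0.eq_or_lt with rfl | hx
  · simpa using hy
  by_cases hxm : x ≤ m
  · nlinarith [hm hx]
  have hεpos : 0 < ε := by
    by_contra! h
    nlinarith [N.cast_nonneg (α := ℝ)]
  set n := ⌈x / ε⌉₊
  have hn : 0 < n := Nat.ceil_pos.2 (div_pos hx hεpos)
  have hxn : x ≤ n * ε := (div_le_iff₀ hεpos).1 (Nat.le_ceil _)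
  have hnx : (n : ℝ) * ε < x + ε := by
    have := Nat.ceil_lt_add_one (div_pos hx hεpos).le
    rwa [← lt_div_iff₀ hεpos, add_div, div_self hεpos.ne']
  have hcast : ((n - 1 : ℕ) : ℝ) = n - 1 := Nat.cast_pred hn
  have hbelow : ((n - 1 : ℕ) : ℝ) * ε < x := by rw [hcast]; linarith
  have hnN : n - 1 ≤ N := by
    have : ((n - 1 : ℕ) : ℝ) < N := lt_of_mul_lt_mul_right (by linarith) hεpos.le
    exact_mod_cast this.le
  have := hlev (n - 1) hnN hbelow
  rw [hcast] at this
  nlinarith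

namespace DDF

instance : PartialOrder DDF := Subtype.partialOrder _

theorem monotone (φ : DDF) : Monotone φ.1 := by
  intro s t hst
  rcases hst.eq_or_lt with rfl | h
  · exact le_rfl
  · rw [← φ.2 t]
    exact le_iSup (fun s : {s // s < t} => φ.1 s.1) ⟨s, h⟩

theorem apply_zero (φ : DDF) : φ.1 0 = 0 := by
  rw [← φ.2 0]
  exact le_antisymm (iSup_le fun s => absurd s.2 ENNReal.not_lt_zero) bot_le

noncomputable def pointwiseSup (Φ : Set DDF) (u : ℝ≥0∞) : I := ⨆ ψ ∈ Φ, ψ.1 u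

section pointwiseSup

variable {Φ : Set DDF}

theorem pointwiseSup_mono : Monotone (pointwiseSup Φ) :=
  fun _ _ huv => iSup₂_mono fun ψ _ => ψ.monotone huv

theorem pointwiseSup_zero : pointwiseSup Φ 0 = 0 :=
  le_antisymm (iSup₂_le fun ψ _ => (apply_zero ψ).le) bot_le

theorem exists_lt_apply_of_lt_pointwiseSup {u : ℝ≥0∞} {v : ℝ} (hv : 0 ≤ v)
    (h : v < pointwiseSup Φ u) : ∃ ψ ∈ Φ, v < ψ.1 u := by
  have hv' : (⟨v, hv, h.le.trans (pointwiseSup Φ u).2.2⟩ : I) < pointwiseSup Φ u := h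
  obtain ⟨ψ, hψ, hlt⟩ := lt_biSup_iff.1 hv'
  exact ⟨ψ, hψ, hlt⟩

theorem exists_mem_forall_lt_pointwiseSup_sub (hne : Φ.Nonempty) {δ : ℝ≥0∞} (hδ : δ ≠ 0)
    {v : ℝ} (hv : 0 ≤ v) :
    ∃ g ∈ Φ, ∃ w : ℝ, v < w ∧ ∀ s, v < pointwiseSup Φ (s - δ) → w ≤ g.1 s := by
  rcases Set.eq_empty_or_nonempty {u | v < pointwiseSup Φ u} with hS | hS
  · obtain ⟨g, hg⟩ := hne
    exact ⟨g, hg, v + 1, by linarith, fun s hs => (Set.eq_empty_iff_forall_notMem.1 hS _ hs).elim⟩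
  obtain ⟨u, hu, hmin⟩ := ENNReal.exists_mem_forall_le_add hS hδ
  obtain ⟨g, hg, hgu⟩ := exists_lt_apply_of_lt_pointwiseSup hv hu
  refine ⟨g, hg, g.1 u, hgu, fun s hs => Subtype.coe_le_coe.2 (g.monotone ?_)⟩
  have hδs : δ ≤ s := by
    by_contra! h
    rw [tsub_eq_zero_of_le h.le, pointwiseSup_zero] at hs
    exact (hs.trans_le' hv).false
  simpa [tsub_add_cancel_of_le hδs] using hmin _ hs

theorem exists_mem_mul_pointwiseSup_sub_le (hne : Φ.Nonempty) (hdir : DirectedOn (· ≤ ·) Φ)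
    {c : I} (hc : c < 1) {δ : ℝ≥0∞} (hδ : δ ≠ 0) :
    ∃ φ ∈ Φ, ∀ s, c * pointwiseSup Φ (s - δ) ≤ φ.1 s := by
  obtain ⟨g₀, hg₀, m, hm, hg₀m⟩ := exists_mem_forall_lt_pointwiseSup_sub hne hδ le_rfl
  set ε : ℝ := (1 - c) * m
  have hε : 0 < ε := mul_pos (sub_pos.2 hc) hm
  obtain ⟨N, hN⟩ := exists_nat_ge (1 / ε)
  choose g hg w hw hgw using fun k : ℕ =>
    exists_mem_forall_lt_pointwiseSup_sub hne hδ (by positivity : 0 ≤ (k : ℝ) * ε)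
  classical
  have := hne.to_subtype
  obtain ⟨χ, hχ⟩ := hdir.directed_val.finset_le
    (insert ⟨g₀, hg₀⟩ ((Finset.range (N + 1)).image fun k => ⟨g k, hg k⟩))
  refine ⟨χ, χ.2, fun s => ?_⟩
  rw [← Subtype.coe_le_coe, Set.Icc.coe_mul]
  refine mul_le_of_forall_nat_mul_lt_imp_le hc.le (pointwiseSup Φ _).2.1 (pointwiseSup Φ _).2.2
    (χ.1.1 s).2.1 le_rfl ((div_le_iff₀ hε).1 hN) (fun hx => ?_) (fun k hk hx => ?_)
  · exact (hg₀m s hx).trans (Subtype.coe_le_coe.2 (hχ _ (Finset.mem_insert_self _ _) s))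
  · refine (hw k).le.trans ((hgw k s hx).trans (Subtype.coe_le_coe.2 (hχ ⟨g k, hg k⟩ ?_ s)))
    exact Finset.mem_insert_of_mem (Finset.mem_image_of_mem _ (Finset.mem_range_succ_iff.2 hk))

end pointwiseSup

noncomputable def step (δ : ℝ≥0∞) (c : I) : DDF :=
  ⟨fun s => if s ≤ δ then 0 else c, by
    intro t
    by_cases ht : t ≤ δ
    · simp only [if_pos ht]
      exact le_antisymm (iSup_le fun s => (if_pos (s.2.le.trans ht)).le) bot_le
    · obtain ⟨s₀, hδs₀, hs₀t⟩ := exists_between (not_le.1 ht)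
      simp only [if_neg ht]
      refine le_antisymm (iSup_le fun s => ?_) (le_iSup_of_le ⟨s₀, hs₀t⟩ ?_)
      · split_ifs
        exacts [bot_le, le_rfl]
      · simp [not_le.2 hδs₀]⟩

theorem convProd_step_le {amp : I → I → I} (hamp : ∀ p q, amp p q ≤ p * q)
    {f : ℝ≥0∞ → I} (hf : Monotone f) {δ : ℝ≥0∞} (hδ : δ ≠ ∞) {c : I} {g : ℝ≥0∞ → I}
    (hg : ∀ s, c * f (s - δ) ≤ g s) (s : ℝ≥0∞) : convProd amp f (step δ c).1 s ≤ g s := by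
  refine iSup_le fun ⟨⟨r, u⟩, hru⟩ => (hamp _ _).trans ?_
  change f r * (if u ≤ δ then 0 else c) ≤ g s
  split_ifs with hu
  · rw [mul_zero]
    exact bot_le
  · have hr : r ≤ s - δ :=
      ENNReal.le_sub_of_add_le_right hδ ((add_le_add le_rfl (not_le.1 hu).le).trans hru)
    rw [mul_comm]
    exact (mul_le_mul_right (hf hr) c).trans (hg s)

end DDF

theorem unitInterval.lukasiewicz_le_mul (p q : I) : max ((p : ℝ) + q - 1) 0 ≤ (p * q : I) :=
  max_le (by push_cast; nlinarith [p.2.2, q.2.2]) (p * q).2.1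

/-- **Proposition 8.4** of the paper: let `&` be either multiplication or the
Łukasiewicz operation on `[0,1]` and let `Δ_&` be the quantale of distance
distribution functions with the convolution product `⊗` (with suprema computed
pointwise). Then for every up-directed `Φ ⊆ Δ_&`:
`sup_{φ ∈ Φ} ((sup Φ) ⊸ φ) = k`, where `ψ ⊸ χ = sup {ρ ∈ Δ_& | ψ ⊗ ρ ≤ χ}`. -/
theorem up_directed_himp_sup_eq_unit
    (amp : unitInterval → unitInterval → unitInterval)
    (hamp : (∀ p q, amp p q = p * q) ∨
      (∀ p q, (amp p q : ℝ) = max ((p : ℝ) + (q : ℝ) - 1) 0))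
    (Φ : Set DDF) (hΦne : Φ.Nonempty)
    (hΦdir : ∀ φ ∈ Φ, ∀ ψ ∈ Φ, ∃ χ ∈ Φ,
      (∀ t, φ.1 t ≤ χ.1 t) ∧ (∀ t, ψ.1 t ≤ χ.1 t)) :
    ∀ t : ℝ≥0∞,
      (⨆ φ ∈ Φ, ⨆ ρ : DDF, ⨆ _ : ∀ s : ℝ≥0∞,
          convProd amp (fun u => ⨆ ψ ∈ Φ, ψ.1 u) ρ.1 s ≤ φ.1 s,
        ρ.1 t) = kDDF t := by
  have hamp_le : ∀ p q, amp p q ≤ p * q := by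
    rcases hamp with h | h
    · exact fun p q => (h p q).le
    · exact fun p q =>
        Subtype.coe_le_coe.1 ((h p q).trans_le (unitInterval.lukasiewicz_le_mul p q))
  intro t
  rcases eq_or_ne t 0 with rfl | ht
  · rw [kDDF, if_pos rfl]
    exact le_antisymm (iSup₂_le fun _ _ => iSup₂_le fun ρ _ => (DDF.apply_zero ρ).le) bot_le
  rw [kDDF, if_neg ht]
  refine le_antisymm le_top (le_of_forall_lt_imp_le_of_dense fun c hc => ?_)
  obtain ⟨δ, hδ, hδt⟩ := exists_between (pos_iff_ne_zero.2 ht)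
  obtain ⟨φ, hφ, hφle⟩ :=
    DDF.exists_mem_mul_pointwiseSup_sub_le hΦne (fun φ hφ ψ hψ => hΦdir φ hφ ψ hψ) hc hδ.ne'
  refine le_iSup₂_of_le φ hφ (le_iSup₂_of_le (DDF.step δ c)
    (DDF.convProd_step_le hamp_le DDF.pointwiseSup_mono hδt.ne_top hφle) ?_)
  exact (if_neg (not_le.2 hδt)).ge
end

section
/- Let A and B be topological spaces and φ : A → Set(B) a correspondence such that φ(x) is nonempty and compact for every x ∈ A, and such that φ is lower hemicontinuous ({x | φ(x) ∩ O ≠ ∅} is open for every open O ⊆ B) and upper hemicontinuous ({x | φ(x) ⊆ O} is open for every open O ⊆ B). Let e : B → [−∞,∞] be continuous, where [−∞,∞] denotes the extended real line with its order topology. Then for every x ∈ A the supremum m(x) = sup_{y ∈ φ(x)} e(y) is attained as a maximum (there exists y ∈ φ(x) with e(y) = m(x)), and the function m : A → [−∞,∞] is continuous. (Berge's maximum theorem, main assertion.) -/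
/-- **Berge's maximum theorem** (main assertion): if `φ : A → Set B` is a lower
and upper hemicontinuous correspondence with nonempty compact values between
topological spaces and `e : B → [-∞,∞]` is continuous, then for every `x` the
supremum `m x = sup_{y ∈ φ x} e y` is attained as a maximum, and
`m : A → [-∞,∞]` is continuous. -/
theorem berge_maximum_theorem {A B : Type*} [TopologicalSpace A] [TopologicalSpace B]
    (φ : A → Set B)
    (hne : ∀ x, (φ x).Nonempty) (hcpt : ∀ x, IsCompact (φ x))
    (hlhc : ∀ O : Set B, IsOpen O → IsOpen {x | (φ x ∩ O).Nonempty})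
    (huhc : ∀ O : Set B, IsOpen O → IsOpen {x | φ x ⊆ O})
    (e : B → EReal) (he : Continuous e) :
    (∀ x, ∃ y ∈ φ x, e y = ⨆ z ∈ φ x, e z) ∧
      Continuous (fun x => ⨆ y ∈ φ x, e y) := by
  have hmax : ∀ x, ∃ y ∈ φ x, e y = ⨆ z ∈ φ x, e z := by
    intro x
    obtain ⟨y, hy, hm⟩ := (hcpt x).exists_isMaxOn (hne x) he.continuousOn
    exact ⟨y, hy, le_antisymm (le_iSup₂ (f := fun z _ => e z) y hy)
      (iSup₂_le fun z hz => hm hz)⟩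
  refine ⟨hmax, ?_⟩
  rw [continuous_iff_lower_upperSemicontinuous]
  constructor
  · rw [lowerSemicontinuous_iff_isOpen_preimage]
    intro a
    have : (fun x => ⨆ y ∈ φ x, e y) ⁻¹' Set.Ioi a
        = {x | (φ x ∩ e ⁻¹' Set.Ioi a).Nonempty} := by
      ext x
      simp [Set.Nonempty, lt_iSup_iff, and_comm]
    rw [this]
    exact hlhc _ (isOpen_Ioi.preimage he)
  · rw [upperSemicontinuous_iff_isOpen_preimage]
    intro a
    have : (fun x => ⨆ y ∈ φ x, e y) ⁻¹' Set.Iio a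
        = {x | φ x ⊆ e ⁻¹' Set.Iio a} := by
      ext x
      constructor
      · intro hx z hz
        exact lt_of_le_of_lt (le_iSup₂ (f := fun z _ => e z) z hz) hx
      · intro hx
        obtain ⟨y, hy, hey⟩ := hmax x
        simpa [← hey] using hx hy
    rw [this]
    exact huhc _ (isOpen_Iio.preimage he)
end

section
/- Let A and B be topological spaces, φ : A → Set(B) a lower hemicontinuous correspondence (i.e. {x | φ(x) ∩ O ≠ ∅} is open in A for every open O ⊆ B), and e : B → [−∞,∞] a lower semicontinuous function. Then the function r : A → [−∞,∞] defined by r(x) = sup_{y ∈ φ(x)} e(y) is lower semicontinuous. -/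
/-- Half of Berge's maximum theorem: if `φ : A → Set B` is a lower
hemicontinuous correspondence between topological spaces and `e : B → [-∞,∞]`
is lower semicontinuous, then `r x = sup_{y ∈ φ x} e y` is lower
semicontinuous. -/
theorem lowerSemicontinuous_sup_of_lhc {A B : Type*}
    [TopologicalSpace A] [TopologicalSpace B]
    (φ : A → Set B)
    (hlhc : ∀ O : Set B, IsOpen O → IsOpen {x | (φ x ∩ O).Nonempty})
    (e : B → EReal) (he : LowerSemicontinuous e) :
    LowerSemicontinuous (fun x => ⨆ y ∈ φ x, e y) := by
  intro x c hc
  simp only [lt_iSup_iff] at hc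
  obtain ⟨y, hy, hcy⟩ := hc
  have hO : IsOpen {b | c < e b} := by
    rw [isOpen_iff_mem_nhds]
    intro b hb
    exact he b c hb
  have hopen := hlhc _ hO
  have hmem : x ∈ {x | (φ x ∩ {b | c < e b}).Nonempty} := ⟨y, hy, hcy⟩
  filter_upwards [hopen.mem_nhds hmem] with z hz
  obtain ⟨w, hw, hcw⟩ := hz
  exact lt_of_lt_of_le hcw (le_iSup₂ (f := fun y _ => e y) w hw)
end

section
/- Let A and B be topological spaces, φ : A → Set(B) an upper hemicontinuous correspondence (i.e. {x | φ(x) ⊆ O} is open in A for every open O ⊆ B) such that φ(x) is nonempty and compact for every x ∈ A, and let e : B → [−∞,∞] be an upper semicontinuous function. Then for every x ∈ A the supremum m(x) = sup_{y ∈ φ(x)} e(y) is attained as a maximum (there exists y ∈ φ(x) with e(y) = m(x)), and the function m : A → [−∞,∞] is upper semicontinuous. -/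
/-- Half of Berge's maximum theorem: if `φ : A → Set B` is an upper
hemicontinuous correspondence with nonempty compact values between topological
spaces and `e : B → [-∞,∞]` is upper semicontinuous, then for every `x` the
supremum `m x = sup_{y ∈ φ x} e y` is attained as a maximum, and `m` is upper
semicontinuous. -/
theorem upperSemicontinuous_sup_of_uhc {A B : Type*}
    [TopologicalSpace A] [TopologicalSpace B]
    (φ : A → Set B)
    (huhc : ∀ O : Set B, IsOpen O → IsOpen {x | φ x ⊆ O})
    (hne : ∀ x, (φ x).Nonempty) (hcpt : ∀ x, IsCompact (φ x))
    (e : B → EReal) (he : UpperSemicontinuous e) :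
    (∀ x, ∃ y ∈ φ x, e y = ⨆ z ∈ φ x, e z) ∧
      UpperSemicontinuous (fun x => ⨆ y ∈ φ x, e y) := by
  constructor
  · intro x
    set m : EReal := ⨆ z ∈ φ x, e z with hm
    by_cases hbot : m = ⊥
    · obtain ⟨y, hy⟩ := hne x
      refine ⟨y, hy, le_antisymm ?_ ?_⟩
      · exact le_iSup₂_of_le y hy le_rfl
      · rw [hbot]; exact bot_le
    · by_contra h
      push_neg at h
      have hcover : φ x ⊆ ⋃ c : {c : EReal // c < m}, {y | e y < c.1} := by
        intro y hy
        have hlt : e y < m := lt_of_le_of_ne (le_iSup₂_of_le y hy le_rfl) (h y hy)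
        obtain ⟨c, hc1, hc2⟩ := exists_between hlt
        exact Set.mem_iUnion.2 ⟨⟨c, hc2⟩, hc1⟩
      obtain ⟨t, ht⟩ := (hcpt x).elim_finite_subcover _
        (fun c : {c : EReal // c < m} => he.isOpen_preimage c.1) hcover
      have hle : m ≤ t.sup (fun c => c.1) := by
        apply iSup₂_le
        intro y hy
        obtain ⟨i, hi, hlt⟩ := Set.mem_iUnion₂.1 (ht hy)
        exact le_trans hlt.le (Finset.le_sup hi)
      have hlt : t.sup (fun c => c.1) < m := by
        rw [Finset.sup_lt_iff (Ne.bot_lt hbot)]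
        exact fun c _ => c.2
      exact absurd (hle.trans_lt hlt) (lt_irrefl m)
  · intro x c hc
    obtain ⟨c', hc1, hc2⟩ := exists_between hc
    have hO : IsOpen {y | e y < c'} := he.isOpen_preimage c'
    have hsub : φ x ⊆ {y | e y < c'} := by
      intro y hy
      exact lt_of_le_of_lt (le_iSup₂_of_le y hy le_rfl) hc1
    have hmem : {x' | φ x' ⊆ {y | e y < c'}} ∈ nhds x :=
      (huhc _ hO).mem_nhds hsub
    filter_upwards [hmem] with x' hx'
    calc (⨆ y ∈ φ x', e y) ≤ c' := iSup₂_le fun y hy => (hx' hy).le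
    _ < c := hc2
end

section
/- In [0,∞] define z ⊖ y = sup{v ∈ [0,∞] | v + y ≤ z} (truncated difference, with ∞ ⊖ y = ∞ for all y). Then for every nonempty subset S ⊆ [0,∞] and every x ∈ [0,∞]: the infimum, over all ultrafilters 𝔵 on [0,∞] with S ∈ 𝔵, of x ⊖ (inf_{R ∈ 𝔵} sup R), equals x ⊖ sup S. (This identifies the ultrafilter convergence ν_sup(𝔵,x) = x ⊖ inf_{R ∈ 𝔵} sup R on the Lawvere quantale [0,∞] with the point-set distance δ_sup(S,x) = x ⊖ sup S on nonempty sets.) -/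
/-!
`sSup S` lies in the closure of `S`, so some ultrafilter containing `S` converges to `sSup S`.
Every member `R` of such an ultrafilter still has `sSup S` in its closure, hence `sSup S ≤ sSup R`;
so for this ultrafilter `inf_{R ∈ 𝔵} sup R = sup S`, while `S ∈ 𝔵` always gives `≤`.
As `x ⊖ ·` is antitone, the infimum over ultrafilters is attained there.
-/

open scoped ENNReal Topology

/-- Truncated difference on `[0,∞]` as defined in the paper:
`z ⊖ y = sup {v | v + y ≤ z}` (so that `∞ ⊖ y = ∞` for all `y`). -/
noncomputable def tdiff (z y : ℝ≥0∞) : ℝ≥0∞ :=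
  sSup {v : ℝ≥0∞ | v + y ≤ z}

theorem tdiff_le_tdiff_left {y y' : ℝ≥0∞} (h : y ≤ y') (x : ℝ≥0∞) : tdiff x y' ≤ tdiff x y :=
  sSup_le_sSup fun _ hv => (add_le_add le_rfl h).trans hv

theorem Ultrafilter.le_iInf_sSup_of_le_nhds {α : Type*} [CompleteLattice α] [TopologicalSpace α]
    [ClosedIicTopology α] {a : α} {𝔵 : Ultrafilter α} (h : ↑𝔵 ≤ 𝓝 a) :
    a ≤ ⨅ R ∈ 𝔵, sSup R :=
  le_iInf₂ fun _ hR =>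
    le_of_tendsto (Filter.tendsto_id'.mpr h) (Filter.mem_of_superset hR fun _ => le_sSup)

theorem exists_ultrafilter_mem_iInf_sSup_eq {α : Type*} [CompleteLinearOrder α]
    [TopologicalSpace α] [OrderTopology α] {S : Set α} (hS : S.Nonempty) :
    ∃ 𝔵 : Ultrafilter α, S ∈ 𝔵 ∧ ⨅ R ∈ 𝔵, sSup R = sSup S := by
  obtain ⟨𝔵, hS𝔵, h𝔵⟩ := mem_closure_iff_ultrafilter.mp (sSup_mem_closure hS)
  exact ⟨𝔵, hS𝔵, le_antisymm (iInf₂_le S hS𝔵) (Ultrafilter.le_iInf_sSup_of_le_nhds h𝔵)⟩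

/-- **Example 5.8** of the paper: the ultrafilter convergence
`ν_sup(𝔵,x) = x ⊖ inf_{R ∈ 𝔵} sup R` on the Lawvere quantale `[0,∞]`
corresponds to the point-set distance `δ_sup(S,x) = x ⊖ sup S` on nonempty
sets: for every nonempty `S ⊆ [0,∞]` and `x ∈ [0,∞]`,
`inf { x ⊖ (inf_{R ∈ 𝔵} sup R) | 𝔵 an ultrafilter with S ∈ 𝔵 } = x ⊖ sup S`. -/
theorem nu_sup_corresponds_delta_sup (S : Set ℝ≥0∞) (hS : S.Nonempty) (x : ℝ≥0∞) :
    (⨅ 𝔵 : Ultrafilter ℝ≥0∞, ⨅ _ : S ∈ 𝔵,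
        tdiff x (⨅ R : Set ℝ≥0∞, ⨅ _ : R ∈ 𝔵, sSup R)) = tdiff x (sSup S) := by
  apply le_antisymm
  · obtain ⟨𝔵, hS𝔵, h𝔵⟩ := exists_ultrafilter_mem_iInf_sSup_eq hS
    rw [← h𝔵]
    exact iInf₂_le 𝔵 hS𝔵
  · refine le_iInf₂ fun 𝔵 hS𝔵 => tdiff_le_tdiff_left ?_ x
    exact iInf₂_le S hS𝔵
end
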